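/- arXiv:1005.1972 — 8 statements merged into one kernel-verified Lean document; each statement's English description precedes it below -/
import Mathlib

section
/- Let b ∈ ℕA and let m ≥ 1 be an integer. Then −b ∼ −m·b; explicitly, for every group homomorphism φ : ℤ^d → ℤ with φ(aᵢ) ≥ 0 for all i and every l ∈ ℤ^d such that k·l ∈ G_φ for some integer k ≥ 1, one has −b − l ∈ ℕA + G_φ if and only if −m·b − l ∈ ℕA + G_φ. -/
/-!
Combinatorial setting: `a₁,…,a_n ∈ ℤ^d` generate `ℤ^d` as a group, `ℕA` is the submonoid
they generate. For a group homomorphism `φ : ℤ^d → ℤ` with `φ(aᵢ) ≥ 0` (encoding a face),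
`M_φ = {x ∈ ℕA : φ x = 0}` and `G_φ` is the subgroup generated by `M_φ`. The relation
`a ∼ b` says: for every such `φ` and every `l ∈ ℤ^d` with `k·l ∈ G_φ` for some `k ≥ 1`,
`a − l ∈ ℕA + G_φ ⟺ b − l ∈ ℕA + G_φ` (i.e. `E_τ(a) = E_τ(b)` for all faces `τ`).
-/

open Pointwise

/-- The submonoid `ℕA` of `ℤ^d` generated by `a₁,…,a_n`. -/
def NA {d n : ℕ} (a : Fin n → Fin d → ℤ) : AddSubmonoid (Fin d → ℤ) :=
  AddSubmonoid.closure (Set.range a)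

/-- The subgroup `G_φ = ℤ(A ∩ τ)` generated by the face `M_φ = {x ∈ ℕA : φ x = 0}`. -/
def Gface {d n : ℕ} (a : Fin n → Fin d → ℤ) (φ : (Fin d → ℤ) →+ ℤ) :
    AddSubgroup (Fin d → ℤ) :=
  AddSubgroup.closure {x | x ∈ NA a ∧ φ x = 0}

/-- The set `ℕA + G_φ ⊆ ℤ^d`. -/
def faceSum {d n : ℕ} (a : Fin n → Fin d → ℤ) (φ : (Fin d → ℤ) →+ ℤ) :
    Set (Fin d → ℤ) :=
  (NA a : Set (Fin d → ℤ)) + (Gface a φ : Set (Fin d → ℤ))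

/-- The relation `x ∼ y`: `E_τ(x) = E_τ(y)` for all faces `τ`. -/
def sim {d n : ℕ} (a : Fin n → Fin d → ℤ) (x y : Fin d → ℤ) : Prop :=
  ∀ φ : (Fin d → ℤ) →+ ℤ, (∀ i, 0 ≤ φ (a i)) →
    ∀ l : Fin d → ℤ, (∃ k : ℕ, 1 ≤ k ∧ (k : ℤ) • l ∈ Gface a φ) →
      (x - l ∈ faceSum a φ ↔ y - l ∈ faceSum a φ)

/-!
A face functional `φ` is nonnegative on `ℕA` and vanishes on `G_φ`, hence is nonnegative on
`ℕA + G_φ`, and it vanishes on the torsion-over-`G_φ` element `l`. So `−j·b − l ∈ ℕA + G_φ`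
with `j ≥ 1` forces `φ b = 0`, i.e. `b ∈ M_φ ⊆ G_φ`, and then `−b − l` and `−m·b − l` differ by
an element of `G_φ`, which `ℕA + G_φ` absorbs.
-/

section Face

variable {d n : ℕ} (a : Fin n → Fin d → ℤ) (φ : (Fin d → ℤ) →+ ℤ)

lemma map_nonneg_of_mem_NA (hφ : ∀ i, 0 ≤ φ (a i)) {x : Fin d → ℤ} (hx : x ∈ NA a) :
    0 ≤ φ x := by
  induction hx using AddSubmonoid.closure_induction with
  | mem x hx => obtain ⟨i, rfl⟩ := hx; exact hφ i
  | zero => simp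
  | add x y _ _ hx hy => rw [map_add]; exact add_nonneg hx hy

lemma Gface_le_ker : Gface a φ ≤ φ.ker :=
  (AddSubgroup.closure_le _).mpr fun _ hx => hx.2

lemma mem_Gface_of_map_eq_zero {x : Fin d → ℤ} (hx : x ∈ NA a) (hφx : φ x = 0) :
    x ∈ Gface a φ :=
  AddSubgroup.subset_closure ⟨hx, hφx⟩

lemma map_eq_zero_of_smul_mem_Gface {l : Fin d → ℤ} {k : ℕ} (hk : 1 ≤ k)
    (hkl : (k : ℤ) • l ∈ Gface a φ) : φ l = 0 := by
  have h : (k : ℤ) * φ l = 0 := by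
    rw [← smul_eq_mul, ← map_zsmul]; exact Gface_le_ker a φ hkl
  exact (mul_eq_zero.mp h).resolve_left (by omega)

lemma map_nonneg_of_mem_faceSum (hφ : ∀ i, 0 ≤ φ (a i)) {x : Fin d → ℤ}
    (hx : x ∈ faceSum a φ) : 0 ≤ φ x := by
  obtain ⟨s, hs, t, ht, rfl⟩ := hx
  rw [map_add, Gface_le_ker a φ ht, add_zero]
  exact map_nonneg_of_mem_NA a φ hφ hs

lemma add_mem_faceSum {x g : Fin d → ℤ} (hx : x ∈ faceSum a φ) (hg : g ∈ Gface a φ) :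
    x + g ∈ faceSum a φ := by
  obtain ⟨s, hs, t, ht, rfl⟩ := hx
  exact ⟨s, hs, t + g, add_mem ht hg, (add_assoc s t g).symm⟩

lemma neg_nsmul_sub_mem_faceSum_of_neg_nsmul_sub_mem_faceSum (hφ : ∀ i, 0 ≤ φ (a i))
    {b l : Fin d → ℤ} (hb : b ∈ NA a) (hl : φ l = 0) {j : ℕ} (hj : 1 ≤ j) (i : ℕ)
    (hmem : -(j • b) - l ∈ faceSum a φ) : -(i • b) - l ∈ faceSum a φ := by
  have hjb : 0 ≤ -((j : ℤ) * φ b) := by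
    have := map_nonneg_of_mem_faceSum a φ hφ hmem
    rwa [map_sub, map_neg, map_nsmul, hl, sub_zero, nsmul_eq_mul] at this
  have hb0 : φ b = 0 := by
    have hb_nonneg := map_nonneg_of_mem_NA a φ hφ hb
    have hj' : (1 : ℤ) ≤ j := by exact_mod_cast hj
    nlinarith
  have hbG : ((j : ℤ) - i) • b ∈ Gface a φ :=
    AddSubgroup.zsmul_mem _ (mem_Gface_of_map_eq_zero a φ hb hb0) _
  have hdiff : -(i • b) - l = (-(j • b) - l) + ((j : ℤ) - i) • b := by
    rw [sub_smul, natCast_zsmul, natCast_zsmul]; abel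
  exact hdiff ▸ add_mem_faceSum a φ hmem hbG

end Face

theorem neg_sim_neg_smul_general {d n : ℕ}
    (a : Fin n → Fin d → ℤ)
    (b : Fin d → ℤ) (hb : b ∈ NA a) (m : ℕ) (hm : 1 ≤ m) :
    sim a (-b) (-(m • b)) := by
  rintro φ hφ l ⟨k, hk, hkl⟩
  have hl := map_eq_zero_of_smul_mem_Gface a φ hk hkl
  refine ⟨fun h => ?_, fun h => ?_⟩
  · exact neg_nsmul_sub_mem_faceSum_of_neg_nsmul_sub_mem_faceSum a φ hφ hb hl le_rfl m
      (by rwa [one_nsmul])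
  · simpa using neg_nsmul_sub_mem_faceSum_of_neg_nsmul_sub_mem_faceSum a φ hφ hb hl hm 1 h

/-- For `b ∈ ℕA` and `m ≥ 1`, one has `−b ∼ −m·b`: for every group
homomorphism `φ : ℤ^d → ℤ` with `φ(aᵢ) ≥ 0` for all `i` and every `l ∈ ℤ^d` with
`k·l ∈ G_φ` for some `k ≥ 1`, `−b − l ∈ ℕA + G_φ ⟺ −m·b − l ∈ ℕA + G_φ`. -/
theorem neg_sim_neg_smul {d n : ℕ} (hd : 0 < d) (hn : 0 < n)
    (a : Fin n → Fin d → ℤ) (hgen : AddSubgroup.closure (Set.range a) = ⊤)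
    (b : Fin d → ℤ) (hb : b ∈ NA a) (m : ℕ) (hm : 1 ≤ m) :
    sim a (-b) (-(m • b)) :=
  neg_sim_neg_smul_general a b hb m hm
end

section
/- Assume ℕA is saturated, i.e. for every x ∈ ℤ^d, if k·x ∈ ℕA for some integer k ≥ 1 then x ∈ ℕA. Let φ : ℤ^d → ℤ be a group homomorphism with φ(aᵢ) ≥ 0 for all i, let a ∈ ℤ^d, and let l ∈ ℤ^d be such that k·l ∈ G_φ for some integer k ≥ 1 and a − l ∈ ℕA + G_φ. Then a ∈ ℕA + G_φ and l ∈ G_φ. (Equivalently: E_τ(a) = {0} if a ∈ ℕA + ℤ(A∩τ), and E_τ(a) = ∅ otherwise.) -/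
/-!
Combinatorial setting: `a₁,…,a_n ∈ ℤ^d` generate `ℤ^d` as a group, `ℕA` is the submonoid
they generate. For a group homomorphism `φ : ℤ^d → ℤ` with `φ(aᵢ) ≥ 0` (encoding a face),
`M_φ = {x ∈ ℕA : φ x = 0}` and `G_φ` is the subgroup generated by `M_φ`. The relation
`a ∼ b` says: for every such `φ` and every `l ∈ ℤ^d` with `k·l ∈ G_φ` for some `k ≥ 1`,
`a − l ∈ ℕA + G_φ ⟺ b − l ∈ ℕA + G_φ` (i.e. `E_τ(a) = E_τ(b)` for all faces `τ`).
-/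

open Pointwise

/-- The subgroup of differences of elements of `M_φ`. -/
def Gdiff {d n : ℕ} (a : Fin n → Fin d → ℤ) (φ : (Fin d → ℤ) →+ ℤ) :
    AddSubgroup (Fin d → ℤ) where
  carrier := {z | ∃ p q : Fin d → ℤ, (p ∈ NA a ∧ φ p = 0) ∧ (q ∈ NA a ∧ φ q = 0) ∧
    z = p - q}
  zero_mem' := ⟨0, 0, ⟨(NA a).zero_mem, map_zero φ⟩, ⟨(NA a).zero_mem, map_zero φ⟩,
    by simp⟩
  add_mem' := by
    rintro z w ⟨p, q, ⟨hp, hp0⟩, ⟨hq, hq0⟩, rfl⟩ ⟨p', q', ⟨hp', hp'0⟩, ⟨hq', hq'0⟩, rfl⟩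
    exact ⟨p + p', q + q', ⟨(NA a).add_mem hp hp', by simp [hp0, hp'0]⟩,
      ⟨(NA a).add_mem hq hq', by simp [hq0, hq'0]⟩, by abel⟩
  neg_mem' := by
    rintro z ⟨p, q, hp, hq, rfl⟩
    exact ⟨q, p, hq, hp, by abel⟩

theorem mem_Gface_iff {d n : ℕ} (a : Fin n → Fin d → ℤ) (φ : (Fin d → ℤ) →+ ℤ)
    (z : Fin d → ℤ) : z ∈ Gface a φ ↔ z ∈ Gdiff a φ := by
  constructor
  · intro hz
    refine AddSubgroup.closure_le (Gdiff a φ) |>.mpr ?_ hz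
    rintro w ⟨hw, hw0⟩
    exact ⟨w, 0, ⟨hw, hw0⟩, ⟨(NA a).zero_mem, map_zero φ⟩, by simp⟩
  · rintro ⟨p, q, hp, hq, rfl⟩
    exact sub_mem (AddSubgroup.subset_closure hp) (AddSubgroup.subset_closure hq)

/-- If `ℕA` is saturated, `φ : ℤ^d → ℤ` has `φ(aᵢ) ≥ 0` for all `i`,
and `l ∈ ℤ^d` satisfies `k·l ∈ G_φ` for some `k ≥ 1` and `x − l ∈ ℕA + G_φ`, then
`x ∈ ℕA + G_φ` and `l ∈ G_φ`. -/
theorem saturated_face_membership {d n : ℕ} (hd : 0 < d) (hn : 0 < n)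
    (a : Fin n → Fin d → ℤ) (hgen : AddSubgroup.closure (Set.range a) = ⊤)
    (hsat : ∀ x : Fin d → ℤ, (∃ k : ℕ, 1 ≤ k ∧ (k : ℤ) • x ∈ NA a) → x ∈ NA a)
    (φ : (Fin d → ℤ) →+ ℤ) (hφ : ∀ i, 0 ≤ φ (a i))
    (x l : Fin d → ℤ) (hl : ∃ k : ℕ, 1 ≤ k ∧ (k : ℤ) • l ∈ Gface a φ)
    (hxl : x - l ∈ faceSum a φ) :
    x ∈ faceSum a φ ∧ l ∈ Gface a φ := by
  obtain ⟨k, hk1, hkl⟩ := hl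
  obtain ⟨p, q, ⟨hp, hp0⟩, ⟨hq, hq0⟩, hpq⟩ := (mem_Gface_iff a φ _).mp hkl
  -- k • (l + q) = p + (k-1) • q ∈ NA
  have hk0 : (0:ℤ) < (k:ℤ) := by exact_mod_cast hk1
  have hmem : (k : ℤ) • (l + q) ∈ NA a := by
    have : (k : ℤ) • (l + q) = p + ((k:ℤ) - 1) • q := by
      rw [smul_add]
      rw [hpq]
      rw [sub_smul, one_smul]
      abel
    rw [this]
    refine (NA a).add_mem hp ?_
    have h1 : ((k:ℤ) - 1) • q = (k - 1 : ℕ) • q := by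
      rw [← Nat.cast_one, ← Nat.cast_sub hk1, natCast_zsmul]
    rw [h1]
    exact AddSubmonoid.nsmul_mem _ hq _
  have hlq : l + q ∈ NA a := hsat _ ⟨k, hk1, hmem⟩
  have hφl : φ l = 0 := by
    have : (k:ℤ) * φ l = 0 := by
      have h := congrArg φ hpq
      rw [map_zsmul φ, map_sub, hp0, hq0, sub_zero, smul_eq_mul] at h
      exact h
    rcases mul_eq_zero.mp this with h | h
    · exact absurd h (by positivity)
    · exact h
  have hlq0 : φ (l + q) = 0 := by simp [hφl, hq0]
  have hlG : l ∈ Gface a φ := by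
    have h1 : l + q ∈ Gface a φ := AddSubgroup.subset_closure ⟨hlq, hlq0⟩
    have h2 : q ∈ Gface a φ := AddSubgroup.subset_closure ⟨hq, hq0⟩
    simpa using sub_mem h1 h2
  refine ⟨?_, hlG⟩
  obtain ⟨u, hu, g, hg, hug⟩ := hxl
  have hug' : u + g = x - l := hug
  exact ⟨u, hu, g + l, add_mem hg hlG,
    show u + (g + l) = x by rw [← add_assoc, hug', sub_add_cancel]⟩
end

section
/- Assume ℕA is saturated, i.e. for every x ∈ ℤ^d, if k·x ∈ ℕA for some integer k ≥ 1 then x ∈ ℕA. Then for all a, b ∈ ℤ^d the following are equivalent: (i) a ∼ b; (ii) for every group homomorphism φ : ℤ^d → ℤ with φ(aᵢ) ≥ 0 for all i, one has a ∈ ℕA + G_φ if and only if b ∈ ℕA + G_φ. -/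
/-!
Combinatorial setting: `a₁,…,a_n ∈ ℤ^d` generate `ℤ^d` as a group, `ℕA` is the submonoid
they generate. For a group homomorphism `φ : ℤ^d → ℤ` with `φ(aᵢ) ≥ 0` (encoding a face),
`M_φ = {x ∈ ℕA : φ x = 0}` and `G_φ` is the subgroup generated by `M_φ`. The relation
`a ∼ b` says: for every such `φ` and every `l ∈ ℤ^d` with `k·l ∈ G_φ` for some `k ≥ 1`,
`a − l ∈ ℕA + G_φ ⟺ b − l ∈ ℕA + G_φ` (i.e. `E_τ(a) = E_τ(b)` for all faces `τ`).
-/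

open Pointwise

/-!
Write `H` for the subgroup generated by a subset `S` of a saturated submonoid `N` of an abelian
group. Every element of `H` is a difference `p - q` of elements of the monoid generated by `S`,
so if `k • z = m + p - q` with `m ∈ N`, then `k • (z + q) = m + p + (k - 1) • q ∈ N`, hence
`z + q ∈ N` and `z ∈ N + H`: the submonoid `N + H` is again saturated. In a saturated submonoid
containing `H`, translating by an `l` with `k • l ∈ H` changes nothing, since `k • z` and
`k • (z - l)` differ by `k • l`. So for saturated `ℕA` the condition on `x - l` and `y - l`
defining `∼` reduces to the one for `l = 0`.
-/

section

variable {G : Type*} [AddCommGroup G]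

theorem AddSubgroup.exists_add_mem_of_mem_closure {S : Set G} {h : G}
    (hh : h ∈ AddSubgroup.closure S) :
    ∃ q ∈ AddSubmonoid.closure S, h + q ∈ AddSubmonoid.closure S := by
  induction hh using AddSubgroup.closure_induction with
  | mem s hs => exact ⟨0, zero_mem _, by simpa using AddSubmonoid.subset_closure hs⟩
  | zero => exact ⟨0, zero_mem _, by simp⟩
  | add g h _ _ hg hh =>
    obtain ⟨p, hp, hgp⟩ := hg
    obtain ⟨q, hq, hhq⟩ := hh
    exact ⟨p + q, add_mem hp hq, by simpa [add_add_add_comm] using add_mem hgp hhq⟩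
  | neg g _ hg =>
    obtain ⟨q, hq, hgq⟩ := hg
    exact ⟨g + q, hgq, by simpa using hq⟩

theorem AddSubmonoid.NSMulSaturated.sup_closure {N : AddSubmonoid G} (hN : N.NSMulSaturated)
    {S : Set G} (hS : S ⊆ N) : (N ⊔ (AddSubgroup.closure S).toAddSubmonoid).NSMulSaturated := by
  rintro (_ | k) z hkz
  · exact Or.inl rfl
  obtain ⟨m, hm, h, hh, hmh⟩ := AddSubmonoid.mem_sup.1 hkz
  obtain ⟨q, hq, hhq⟩ := AddSubgroup.exists_add_mem_of_mem_closure hh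
  have hzq : (k + 1) • (z + q) = m + (h + q) + k • q := by
    rw [nsmul_add, ← hmh, succ_nsmul]
    abel
  have hzqN : z + q ∈ N := by
    refine (hN (hzq ▸ add_mem (add_mem hm ?_) (nsmul_mem ?_ k))).resolve_left k.succ_ne_zero
    exacts [AddSubmonoid.closure_le.2 hS hhq, AddSubmonoid.closure_le.2 hS hq]
  have hqH : -q ∈ AddSubgroup.closure S :=
    neg_mem (AddSubmonoid.closure_le.2 AddSubgroup.subset_closure hq)
  exact Or.inr (AddSubmonoid.mem_sup.2 ⟨z + q, hzqN, -q, hqH, add_neg_cancel_right z q⟩)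

theorem AddSubmonoid.NSMulSaturated.sub_mem_iff {T : AddSubmonoid G} (hT : T.NSMulSaturated)
    {H : AddSubgroup G} (hHT : H.toAddSubmonoid ≤ T) {k : ℕ} (hk : k ≠ 0) {l : G}
    (hl : k • l ∈ H) (z : G) : z - l ∈ T ↔ z ∈ T := by
  refine ⟨fun hzl ↦ (hT ?_).resolve_left hk, fun hz ↦ (hT ?_).resolve_left hk⟩
  · simpa [nsmul_sub] using add_mem (nsmul_mem hzl k) (hHT hl)
  · simpa [nsmul_sub, sub_eq_add_neg] using add_mem (nsmul_mem hz k) (hHT (H.neg_mem hl))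

end

theorem faceSum_eq_coe_sup {d n : ℕ} (a : Fin n → Fin d → ℤ) (φ : (Fin d → ℤ) →+ ℤ) :
    faceSum a φ = ↑(NA a ⊔ (Gface a φ).toAddSubmonoid) :=
  (AddSubmonoid.coe_sup _ _).symm

theorem sim_iff_same_sector_of_saturated_general {d n : ℕ} (a : Fin n → Fin d → ℤ)
    (hsat : ∀ x : Fin d → ℤ, (∃ k : ℕ, 1 ≤ k ∧ (k : ℤ) • x ∈ NA a) → x ∈ NA a)
    (x y : Fin d → ℤ) :
    sim a x y ↔
      ∀ φ : (Fin d → ℤ) →+ ℤ, (∀ i, 0 ≤ φ (a i)) →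
        (x ∈ faceSum a φ ↔ y ∈ faceSum a φ) := by
  refine ⟨fun h φ hφ ↦ by simpa using h φ hφ 0 ⟨1, le_rfl, by simp⟩, ?_⟩
  rintro h φ hφ l ⟨k, hk, hkl⟩
  have hNA : (NA a).NSMulSaturated := fun j z hz ↦
    or_iff_not_imp_left.2 fun hj ↦ hsat z ⟨j, Nat.one_le_iff_ne_zero.2 hj, by rwa [natCast_zsmul]⟩
  have hT : (NA a ⊔ (Gface a φ).toAddSubmonoid).NSMulSaturated :=
    hNA.sup_closure fun _ hz ↦ hz.1
  have hsub := hT.sub_mem_iff le_sup_right (Nat.one_le_iff_ne_zero.1 hk) (natCast_zsmul l k ▸ hkl)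
  simpa only [faceSum_eq_coe_sup, SetLike.mem_coe, hsub] using h φ hφ

/-- If `ℕA` is saturated, then for all `x, y ∈ ℤ^d`: `x ∼ y` iff for
every group homomorphism `φ : ℤ^d → ℤ` with `φ(aᵢ) ≥ 0` for all `i`, one has
`x ∈ ℕA + G_φ ⟺ y ∈ ℕA + G_φ`. -/
theorem sim_iff_same_sector_of_saturated {d n : ℕ} (hd : 0 < d) (hn : 0 < n)
    (a : Fin n → Fin d → ℤ) (hgen : AddSubgroup.closure (Set.range a) = ⊤)
    (hsat : ∀ x : Fin d → ℤ, (∃ k : ℕ, 1 ≤ k ∧ (k : ℤ) • x ∈ NA a) → x ∈ NA a)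
    (x y : Fin d → ℤ) :
    sim a x y ↔
      ∀ φ : (Fin d → ℤ) →+ ℤ, (∀ i, 0 ≤ φ (a i)) →
        (x ∈ faceSum a φ ↔ y ∈ faceSum a φ) :=
  sim_iff_same_sector_of_saturated_general a hsat x y
end

section
/- For every natural number n there exists a natural number K such that for all integers k ≥ K, the cardinality of {b ∈ N : b − k·n ∉ N} is at most k times the cardinality of {b ∈ N : b − n ∉ N} (differences computed in ℤ). (This is the statement that n_{σ,ka} ≤ k·n_{σ,a} for large k when F_σ(a) ≤ 0, in terms of the numerical semigroup N = F_σ(ℕA).) -/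
/-!
Numerical-semigroup setting: `N` is an additive submonoid of `ℕ` whose complement
`ℕ \ N` is finite (e.g. `N = F_σ(ℕA)` for a scored semigroup `ℕA`). For `n : ℕ` we
count `#{b ∈ N : b − n ∉ N}` (difference in `ℤ`) and `#{b ∈ N : b + n ∉ N}`.
-/

/-- `#{b ∈ N : b − n ∉ N}`, the difference `b − n` being computed in `ℤ`
(so `b − n ∉ N` also when `b < n`). -/
noncomputable def cntMinus (N : AddSubmonoid ℕ) (n : ℕ) : ℕ :=
  {b : ℕ | b ∈ N ∧ ∀ c ∈ N, (c : ℤ) ≠ (b : ℤ) - (n : ℤ)}.ncard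

/-- `#{b ∈ N : b + n ∉ N}`. -/
noncomputable def cntPlus (N : AddSubmonoid ℕ) (n : ℕ) : ℕ :=
  {b : ℕ | b ∈ N ∧ b + n ∉ N}.ncard

lemma cntMinus_mem_iff (N : AddSubmonoid ℕ) (m b : ℕ) :
    (∀ c ∈ N, (c : ℤ) ≠ (b : ℤ) - (m : ℤ)) ↔ (b < m ∨ (m ≤ b ∧ b - m ∉ N)) := by
  constructor
  · intro h
    by_cases hb : b < m
    · exact Or.inl hb
    · push_neg at hb
      refine Or.inr ⟨hb, fun hmem => h _ hmem ?_⟩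
      push_cast [Nat.cast_sub hb]
      ring
  · rintro (hb | ⟨hb, hnot⟩) c hc hceq
    · have : (0:ℤ) ≤ c := Int.natCast_nonneg c
      omega
    · have : c = b - m := by omega
      subst this
      exact hnot hc

lemma cntMinus_le (N : AddSubmonoid ℕ) (c : ℕ) (hc : ∀ x, c ≤ x → x ∈ N)
    (m : ℕ) (hm : c ≤ m) : cntMinus N m ≤ m := by
  have key : {b : ℕ | b ∈ N ∧ ∀ c ∈ N, (c : ℤ) ≠ (b : ℤ) - (m : ℤ)}.ncard
      ≤ (↑(Finset.range m) : Set ℕ).ncard := by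
    apply Set.ncard_le_ncard_of_injOn (fun b => if b < m then b else b - m)
    · rintro b ⟨hbN, hcond⟩
      rw [cntMinus_mem_iff] at hcond
      simp only [Finset.coe_range, Set.mem_Iio]
      rcases hcond with hb | ⟨hb, hnot⟩
      · simp [hb]
      · have h1 : b - m < c := by
          by_contra h
          exact hnot (hc _ (by omega))
        split <;> omega
    · rintro b₁ ⟨hb₁N, hc₁⟩ b₂ ⟨hb₂N, hc₂⟩ heq
      rw [cntMinus_mem_iff] at hc₁ hc₂
      by_cases h1 : b₁ < m <;> by_cases h2 : b₂ < m <;>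
        simp only [h1, h2, if_true, if_false, ite_true, ite_false] at heq
      · exact heq
      · exfalso; rcases hc₂ with h | ⟨h, hnot⟩
        · omega
        · exact hnot (heq ▸ hb₁N)
      · exfalso; rcases hc₁ with h | ⟨h, hnot⟩
        · omega
        · exact hnot (heq.symm ▸ hb₂N)
      · omega
  rw [Set.ncard_coe_finset, Finset.card_range] at key
  exact key

lemma le_cntMinus (N : AddSubmonoid ℕ) (c : ℕ) (hc : ∀ x, c ≤ x → x ∈ N)
    (n : ℕ) (hn : 0 < n) : n ≤ cntMinus N n := by
  set S := {b : ℕ | b ∈ N ∧ ∀ c ∈ N, (c : ℤ) ≠ (b : ℤ) - (n : ℤ)} with hS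
  have hfinS : S.Finite := by
    apply Set.Finite.subset (Set.finite_Iio (n + c))
    rintro b ⟨hbN, hcond⟩
    rw [cntMinus_mem_iff] at hcond
    rcases hcond with h | ⟨h, hnot⟩
    · simp only [Set.mem_Iio]; omega
    · have : b - n < c := by
        by_contra hcon
        exact hnot (hc _ (by omega))
      simp only [Set.mem_Iio]; omega
  classical
  have hmin : ∀ r, ∃ x, x ∈ N ∧ x % n = r % n ∧ ∀ y < x, ¬(y ∈ N ∧ y % n = r % n) := by
    intro r
    have hne : ∃ x, x ∈ N ∧ x % n = r % n := by
      refine ⟨c * n + r % n, hc _ ?_, ?_⟩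
      · have h1 : c * 1 ≤ c * n := Nat.mul_le_mul_left c hn
        omega
      · rw [Nat.mul_comm, Nat.mul_add_mod, Nat.mod_mod_of_dvd _ dvd_rfl]
    exact ⟨Nat.find hne, (Nat.find_spec hne).1, (Nat.find_spec hne).2,
      fun y hy => Nat.find_min hne hy⟩
  choose f hfN hfmod hfmin using hmin
  have key : (↑(Finset.range n) : Set ℕ).ncard ≤ S.ncard := by
    apply Set.ncard_le_ncard_of_injOn f _ _ hfinS
    · intro r hr
      simp only [Finset.coe_range, Set.mem_Iio] at hr
      refine ⟨hfN r, ?_⟩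
      rw [cntMinus_mem_iff]
      by_cases h : f r < n
      · exact Or.inl h
      · push_neg at h
        refine Or.inr ⟨h, fun hmem => ?_⟩
        have heq : f r - n + n = f r := by omega
        have hmod : (f r - n) % n = r % n := by
          calc (f r - n) % n = (f r - n + n) % n := (Nat.add_mod_right _ _).symm
            _ = r % n := by rw [heq, hfmod]
        exact hfmin r (f r - n) (by omega) ⟨hmem, hmod⟩
    · intro r₁ hr₁ r₂ hr₂ heq
      simp only [Finset.coe_range, Set.mem_Iio] at hr₁ hr₂
      have h1 := hfmod r₁
      have h2 := hfmod r₂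
      rw [heq, h2] at h1
      rw [Nat.mod_eq_of_lt hr₂, Nat.mod_eq_of_lt hr₁] at h1
      exact h1.symm
  rw [Set.ncard_coe_finset, Finset.card_range] at key
  exact key

/-- If the complement `ℕ \ N` is finite, then for every `n : ℕ` there
is `K : ℕ` such that for all `k ≥ K`, `#{b ∈ N : b − k·n ∉ N} ≤ k · #{b ∈ N : b − n ∉ N}`
(this is `n_{σ,ka} ≤ k·n_{σ,a}` for large `k` when `F_σ(a) ≤ 0`). -/
theorem cntMinus_mul_le (N : AddSubmonoid ℕ)
    (hfin : {m : ℕ | m ∉ N}.Finite) (n : ℕ) :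
    ∃ K : ℕ, ∀ k : ℕ, K ≤ k → cntMinus N (k * n) ≤ k * cntMinus N n := by
  obtain ⟨c, hc⟩ : ∃ c, ∀ x, c ≤ x → x ∈ N := by
    obtain ⟨c, hc⟩ := hfin.bddAbove
    exact ⟨c + 1, fun x hx => by
      by_contra h
      have := hc (Set.mem_setOf_eq ▸ h)
      omega⟩
  rcases Nat.eq_zero_or_pos n with rfl | hn
  · refine ⟨0, fun k _ => ?_⟩
    have h0 : cntMinus N 0 = 0 := by
      unfold cntMinus
      convert Set.ncard_empty ℕ
      ext b
      simp only [Set.mem_setOf_eq, Set.mem_empty_iff_false, iff_false, not_and]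
      intro hb h
      exact h b hb (by push_cast; ring)
    simp [mul_zero, h0]
  · refine ⟨c + 1, fun k hk => ?_⟩
    have h1 : cntMinus N (k * n) ≤ k * n := by
      apply cntMinus_le N c hc
      have : k * 1 ≤ k * n := Nat.mul_le_mul_left k hn
      omega
    have h2 : n ≤ cntMinus N n := le_cntMinus N c hc n hn
    calc cntMinus N (k * n) ≤ k * n := h1
      _ ≤ k * cntMinus N n := Nat.mul_le_mul_left k h2
end

section
/- Assume ℕA is scored with respect to the finite family Φ. Let a ∈ ℤ^d satisfy φ(a) ≤ 0 for all φ ∈ Φ and −a ∉ ℕA. Then there exist φ ∈ Φ and a natural number K such that for all integers k ≥ K one has n_φ(k·a) < k·n_φ(a), where n_φ(x) := #{m ∈ φ(ℕA) : m + φ(x) ∉ φ(ℕA)}. -/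
/-- `n_φ(x) = #{m ∈ φ(ℕA) : m + φ(x) ∉ φ(ℕA)}`. -/
noncomputable def nphi {d n : ℕ} (a : Fin n → Fin d → ℤ)
    (φ : (Fin d → ℤ) →+ ℤ) (x : Fin d → ℤ) : ℕ :=
  {m : ℤ | m ∈ φ '' (NA a : Set (Fin d → ℤ)) ∧
      m + φ x ∉ φ '' (NA a : Set (Fin d → ℤ))}.ncard

/-!
Since `ℕA` is scored and `-x ∉ ℕA`, some facet `φ ∈ Φ` has `t := -φ(x) ∉ S := φ(ℕA)`, and
`t ≥ 0`. The monoid `S` lies in `ℕ` and generates `ℤ`, so it contains a tail `[N, ∞)`.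
Comparing the window `S ∩ [0, N + t)` with its translate by `t` gives, for every `t ≥ 0`,
`#{m ∈ S | m - t ∉ S} = t + #{m ∈ S | m + t ∉ S}`.
For `t = -φ(x) ∉ S` the last set contains `0`, so `n_φ(x) ≥ t + 1`; for `kt ≥ N` it is empty,
so `n_φ(k·x) = kt < k(t + 1)`.
-/

open Set

namespace AddSubmonoid

theorem exists_sub_eq_of_mem_closure {G : Type*} [AddCommGroup G] (M : AddSubmonoid G) {z : G}
    (hz : z ∈ AddSubgroup.closure (M : Set G)) : ∃ p ∈ M, ∃ q ∈ M, p - q = z := by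
  induction hz using AddSubgroup.closure_induction with
  | mem z hz => exact ⟨z, hz, 0, M.zero_mem, sub_zero z⟩
  | zero => exact ⟨0, M.zero_mem, 0, M.zero_mem, sub_zero 0⟩
  | add _ _ _ _ h₁ h₂ =>
    obtain ⟨p₁, hp₁, q₁, hq₁, rfl⟩ := h₁
    obtain ⟨p₂, hp₂, q₂, hq₂, rfl⟩ := h₂
    exact ⟨p₁ + p₂, M.add_mem hp₁ hp₂, q₁ + q₂, M.add_mem hq₁ hq₂, by abel⟩
  | neg _ _ h =>
    obtain ⟨p, hp, q, hq, rfl⟩ := h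
    exact ⟨q, hq, p, hp, (neg_sub p q).symm⟩

lemma zsmul_mem_of_nonneg {G : Type*} [AddGroup G] (M : AddSubmonoid G) {c : ℤ} {m : G}
    (hc : 0 ≤ c) (hm : m ∈ M) : c • m ∈ M := by
  lift c to ℕ using hc
  simpa using M.nsmul_mem hm c

lemma mem_of_mul_self_le (M : AddSubmonoid ℤ) {q m : ℤ} (hq : q ∈ M) (hq' : q + 1 ∈ M)
    (hq0 : 0 ≤ q) (hm : q * q ≤ m) : m ∈ M := by
  obtain rfl | hq0 := hq0.eq_or_lt
  · simpa using M.zsmul_mem_of_nonneg (c := m) (by simpa using hm) hq'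
  · have hr := Int.emod_nonneg m hq0.ne'
    have hrq := Int.emod_lt_of_pos m hq0
    have hc : q ≤ m / q := (Int.le_ediv_iff_mul_le hq0).mpr hm
    have hdecomp : (m / q - m % q) • q + (m % q) • (q + 1) = m := by
      simp only [smul_eq_mul]
      linear_combination Int.mul_ediv_add_emod m q
    rw [← hdecomp]
    exact M.add_mem (M.zsmul_mem_of_nonneg (by omega) hq) (M.zsmul_mem_of_nonneg hr hq')

theorem exists_Ici_subset (M : AddSubmonoid ℤ) (hM : (M : Set ℤ) ⊆ Ici 0)
    (hclosure : AddSubgroup.closure (M : Set ℤ) = ⊤) : ∃ N, Ici N ⊆ (M : Set ℤ) := by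
  obtain ⟨p, hp, q, hq, hpq⟩ :=
    M.exists_sub_eq_of_mem_closure (hclosure ▸ AddSubgroup.mem_top (1 : ℤ))
  obtain rfl : p = q + 1 := by omega
  exact ⟨q * q, fun m hm => M.mem_of_mul_self_le hq hp (hM hq) hm⟩

end AddSubmonoid

/-- For `t ∈ S` this is the Apéry set of `S` with respect to `t`. -/
def apery (S : Set ℤ) (t : ℤ) : Set ℤ := {m | m ∈ S ∧ m - t ∉ S}

section Apery

variable {S : Set ℤ} {N t : ℤ}

lemma apery_subset_Ico (hS : S ⊆ Ici 0) (hN : Ici N ⊆ S) (t : ℤ) :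
    apery S t ⊆ Ico 0 (N + t) := fun m ⟨hm, hmt⟩ =>
  ⟨hS hm, lt_of_not_ge fun h => hmt (hN (show N ≤ m - t by omega))⟩

lemma apery_finite (hS : S ⊆ Ici 0) (hN : Ici N ⊆ S) (t : ℤ) : (apery S t).Finite :=
  (finite_Ico _ _).subset (apery_subset_Ico hS hN t)

lemma apery_neg_eq_empty (hS : S ⊆ Ici 0) (hN : Ici N ⊆ S) (ht : N ≤ t) : apery S (-t) = ∅ :=
  subset_empty_iff.mp <| (apery_subset_Ico hS hN (-t)).trans (Ico_eq_empty (by omega)).subset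

lemma zero_mem_apery_neg (h0 : 0 ∈ S) (ht : t ∉ S) : 0 ∈ apery S (-t) :=
  ⟨h0, by simpa using ht⟩

theorem ncard_apery_eq_add_ncard_apery_neg (hS : S ⊆ Ici 0) (hN : Ici N ⊆ S) (ht : 0 ≤ t) :
    ((apery S t).ncard : ℤ) = t + (apery S (-t)).ncard := by
  set P := S ∩ Iio (N + t)
  have hP : P.Finite := (finite_Ico 0 (N + t)).subset fun m hm => ⟨hS hm.1, hm.2⟩
  have hleft : apery S t = P \ (· + t) '' P := by
    ext m
    have hN' : N ≤ m - t → m - t ∈ S := fun h => hN h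
    simp only [apery, P, image_add_right, mem_sdiff, mem_preimage, mem_inter_iff, mem_Iio,
      mem_ofPred_eq]
    grind
  have hright : (· + t) '' P \ P = (· + t) '' (apery S (-t) ∪ Ico N (N + t)) := by
    ext m
    have hN' : N ≤ m - t → m - t ∈ S := fun h => hN h
    have hN'' : N ≤ m → m ∈ S := fun h => hN h
    have hS' : m - t ∈ S → 0 ≤ m - t := fun h => hS h
    simp only [apery, P, image_add_right, mem_sdiff, mem_preimage, mem_inter_iff, mem_Iio,
      mem_ofPred_eq, mem_Ico, mem_union]
    grind
  have hdisj : Disjoint (apery S (-t)) (Ico N (N + t)) := by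
    refine disjoint_left.mpr fun m hm hm' => ?_
    have := apery_subset_Ico hS hN (-t) hm
    simp only [mem_Ico] at this hm'
    omega
  have hshift := (ncard_eq_ncard_iff_ncard_sdiff_eq_ncard_sdiff hP (hP.image _)).mp
    (ncard_image_of_injective P (add_left_injective t)).symm
  rw [hleft, hshift, hright, ncard_image_of_injective _ (add_left_injective t),
    ncard_union_eq hdisj (apery_finite hS hN _) (finite_Ico _ _), ← Finset.coe_Ico,
    ncard_coe_finset, Int.card_Ico]
  omega

theorem exists_ncard_apery_mul_lt (hS : S ⊆ Ici 0) (hN : Ici N ⊆ S) (h0 : 0 ∈ S) (ht : t ∉ S)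
    (ht0 : 0 ≤ t) : ∃ K : ℕ, ∀ k : ℕ, K ≤ k → (apery S (k * t)).ncard < k * (apery S t).ncard := by
  have hlower : t + 1 ≤ (apery S t).ncard := by
    have := (ncard_pos (apery_finite hS hN _)).mpr ⟨0, zero_mem_apery_neg h0 ht⟩
    rw [ncard_apery_eq_add_ncard_apery_neg hS hN ht0]
    omega
  have ht_pos : 0 < t := ht0.lt_of_ne fun h => ht (h ▸ h0)
  refine ⟨N.toNat + 1, fun k hk => ?_⟩
  have hkt : N ≤ k * t := by
    have : (N.toNat : ℤ) + 1 ≤ k := by exact_mod_cast hk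
    nlinarith [Int.self_le_toNat N]
  have hcount : ((apery S (k * t)).ncard : ℤ) = k * t := by
    rw [ncard_apery_eq_add_ncard_apery_neg hS hN (by positivity), apery_neg_eq_empty hS hN hkt]
    simp
  zify
  nlinarith

end Apery

lemma nphi_eq_ncard_apery {d n : ℕ} (a : Fin n → Fin d → ℤ) (φ : (Fin d → ℤ) →+ ℤ)
    (x : Fin d → ℤ) : nphi a φ x = (apery (φ '' (NA a : Set (Fin d → ℤ))) (-φ x)).ncard := by
  simp only [nphi, apery, sub_neg_eq_add]

section Facet

variable {d n : ℕ} {a : Fin n → Fin d → ℤ} {φ : (Fin d → ℤ) →+ ℤ}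

lemma image_NA_subset_Ici (hφ : ∀ i, 0 ≤ φ (a i)) : φ '' (NA a : Set (Fin d → ℤ)) ⊆ Ici 0 := by
  rintro _ ⟨v, hv, rfl⟩
  induction hv using AddSubmonoid.closure_induction with
  | mem _ hy => obtain ⟨i, rfl⟩ := hy; exact hφ i
  | zero => simp
  | add _ _ _ _ hy hz => rw [map_add]; exact add_nonneg (mem_Ici.mp hy) hz

lemma closure_image_NA_eq_top (hgen : AddSubgroup.closure (Set.range a) = ⊤)
    (hφ : Function.Surjective φ) : AddSubgroup.closure (φ '' (NA a : Set (Fin d → ℤ))) = ⊤ := by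
  refine eq_top_mono (AddSubgroup.closure_mono (image_mono AddSubmonoid.subset_closure)) ?_
  rw [← AddMonoidHom.map_closure, hgen, AddSubgroup.map_top_of_surjective φ hφ]

lemma exists_Ici_subset_image_NA (hgen : AddSubgroup.closure (Set.range a) = ⊤)
    (hφ : Function.Surjective φ) (hφa : ∀ i, 0 ≤ φ (a i)) :
    ∃ N, Ici N ⊆ φ '' (NA a : Set (Fin d → ℤ)) := by
  simpa using ((NA a).map φ).exists_Ici_subset (by simpa using image_NA_subset_Ici hφa)
    (by simpa using closure_image_NA_eq_top hgen hφ)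

end Facet

theorem exists_facet_strict_count_general {d n : ℕ}
    (a : Fin n → Fin d → ℤ) (hgen : AddSubgroup.closure (Set.range a) = ⊤)
    (Φ : Finset ((Fin d → ℤ) →+ ℤ))
    (hsurj : ∀ φ ∈ Φ, Function.Surjective φ)
    (hnonneg : ∀ φ ∈ Φ, ∀ i, 0 ≤ φ (a i))
    (hscored : (NA a : Set (Fin d → ℤ)) =
      {x | ∀ φ ∈ Φ, φ x ∈ φ '' (NA a : Set (Fin d → ℤ))})
    (x : Fin d → ℤ) (hx1 : ∀ φ ∈ Φ, φ x ≤ 0) (hx2 : -x ∉ NA a) :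
    ∃ φ ∈ Φ, ∃ K : ℕ, ∀ k : ℕ, K ≤ k → nphi a φ (k • x) < k * nphi a φ x := by
  obtain ⟨φ, hφΦ, hφx⟩ : ∃ φ ∈ Φ, φ (-x) ∉ φ '' (NA a : Set (Fin d → ℤ)) := by
    by_contra! h
    exact hx2 (hscored ▸ h : -x ∈ (NA a : Set (Fin d → ℤ)))
  obtain ⟨N, hN⟩ := exists_Ici_subset_image_NA hgen (hsurj φ hφΦ) (hnonneg φ hφΦ)
  obtain ⟨K, hK⟩ := exists_ncard_apery_mul_lt (image_NA_subset_Ici (hnonneg φ hφΦ)) hN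
    ⟨0, (NA a).zero_mem, map_zero φ⟩ (by simpa using hφx) (by linarith [hx1 φ hφΦ])
  refine ⟨φ, hφΦ, K, fun k hk => ?_⟩
  rw [nphi_eq_ncard_apery, nphi_eq_ncard_apery, map_nsmul, nsmul_eq_mul, ← mul_neg]
  exact hK k hk

/-- Assume `ℕA` is scored w.r.t. `Φ`. If `x ∈ ℤ^d` satisfies
`φ(x) ≤ 0` for all `φ ∈ Φ` and `−x ∉ ℕA`, then there are `φ ∈ Φ` and `K : ℕ` such
that `n_φ(k·x) < k·n_φ(x)` for all `k ≥ K`. -/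
theorem exists_facet_strict_count {d n : ℕ} (hd : 0 < d) (hn : 0 < n)
    (a : Fin n → Fin d → ℤ) (hgen : AddSubgroup.closure (Set.range a) = ⊤)
    (Φ : Finset ((Fin d → ℤ) →+ ℤ))
    (hsurj : ∀ φ ∈ Φ, Function.Surjective φ)
    (hnonneg : ∀ φ ∈ Φ, ∀ i, 0 ≤ φ (a i))
    (hscored : (NA a : Set (Fin d → ℤ)) =
      {x | ∀ φ ∈ Φ, φ x ∈ φ '' (NA a : Set (Fin d → ℤ))})
    (x : Fin d → ℤ) (hx1 : ∀ φ ∈ Φ, φ x ≤ 0) (hx2 : -x ∉ NA a) :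
    ∃ φ ∈ Φ, ∃ K : ℕ, ∀ k : ℕ, K ≤ k → nphi a φ (k • x) < k * nphi a φ x :=
  exists_facet_strict_count_general a hgen Φ hsurj hnonneg hscored x hx1 hx2
end

section
/- Assume the complement ℕ \ N is nonempty (i.e. the numerical-semigroup algebra K[N] is a 1-dimensional toric algebra which is not normal). Then the ring R (the associated graded ring of the ring of differential operators of K[N]) is not Cohen–Macaulay. -/
/-!
Setting: `K` an algebraically closed field of characteristic 0, `N` an additive
submonoid of `ℕ` with finite complement, `Ω(w) = {b ∈ N : b + w ∉ N}` (computed in `ℤ`),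
and `R ⊆ K[t,ξ]` the `K`-subalgebra generated by `t·ξ` and the monomials
`t^{#Ω(w)}·ξ^{#Ω(−w)}`, `w ∈ ℤ`. By Saito–Traves, `R = gr D(K[N];K)`.
Here `t = X 0` and `ξ = X 1` in `MvPolynomial (Fin 2) K`.
-/

/-- `Ω(w) = {b ∈ N : b + w ∉ N}`, the sum `b + w` computed in `ℤ`. -/
def Om (N : AddSubmonoid ℕ) (w : ℤ) : Set ℕ :=
  {b : ℕ | b ∈ N ∧ ∀ c ∈ N, (c : ℤ) ≠ (b : ℤ) + w}

/-- The associated graded ring `gr D(K[N];K)` in its Saito–Traves description: the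
`K`-subalgebra of `K[t,ξ]` generated by `t·ξ` and `t^{#Ω(w)}·ξ^{#Ω(−w)}`, `w ∈ ℤ`. -/
noncomputable def grR (K : Type) [Field K] (N : AddSubmonoid ℕ) :
    Subalgebra K (MvPolynomial (Fin 2) K) :=
  Algebra.adjoin K
    ({MvPolynomial.X 0 * MvPolynomial.X 1} ∪
      {p | ∃ w : ℤ,
        p = MvPolynomial.X 0 ^ (Om N w).ncard * MvPolynomial.X 1 ^ (Om N (-w)).ncard})

/-- A list `rs` of elements of a commutative ring `R` with `∀ x ∈ rs, x ∈ I` gives a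
length; the depth of `I` on `R` is the supremum of lengths of regular sequences
(in the sense of `RingTheory.Sequence.IsRegular`) contained in `I`. -/
noncomputable def depthIn (R : Type) [CommRing R] (I : Ideal R) : ℕ∞ :=
  sSup {m : ℕ∞ | ∃ rs : List R, (∀ x ∈ rs, x ∈ I) ∧
    RingTheory.Sequence.IsRegular R rs ∧ (rs.length : ℕ∞) = m}

/-- A commutative ring is Cohen–Macaulay if for every maximal ideal `P`, the depth of
the localization at `P` (on its maximal ideal) equals its Krull dimension. -/
def IsCohenMacaulayRing (R : Type) [CommRing R] : Prop :=
  ∀ P : Ideal R, ∀ hP : P.IsMaximal,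
    haveI : P.IsPrime := hP.isPrime
    ((depthIn (Localization.AtPrime P)
        (IsLocalRing.maximalIdeal (Localization.AtPrime P)) : ℕ∞) : WithBot ℕ∞)
      = ringKrullDim (Localization.AtPrime P)

/-!
Let `F` be the Frobenius number of `N`. The counting identity `#Ω(-w) = #Ω(w) + w` shows that
the generators of `R` are `t^a ξ^(a+w)` with `a = #Ω(w)`; in particular `u = tξ` and
`z = tξ^(F+1)` lie in `R`. Adding `(0, F)` to a nonzero exponent of `R` gives again an exponent
of `R`, but `(0, F)` itself is not one. Hence `f z = u (f ξ^F)` with `f ξ^F ∈ R` for every `f`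
in the irrelevant ideal `m`, while `u` divides no `z s` with `s ∉ m`: the fraction `z / u` lies in
`(R_m : m) \ R_m`. If `x, y ∈ m` were a regular sequence of `R_m`, comparing `x z` and `y z`
would give `z ∈ u R_m`, so `depth R_m ≤ 1`. On the other hand `0 ⊊ R ∩ ξ K[t,ξ] ⊊ m` is a
chain of primes, so `dim R_m ≥ 2`.
-/

open MvPolynomial

open RingTheory.Sequence Pointwise in
theorem not_isWeaklyRegular_pair {A : Type*} [CommRing A] {u z x y : A}
    (hu : u ∈ nonZeroDivisors A) (hz : ¬ u ∣ z) (hx : u ∣ x * z) (hy : u ∣ y * z) :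
    ¬ IsWeaklyRegular A [x, y] := by
  rw [isWeaklyRegular_cons_iff, isWeaklyRegular_singleton_iff]
  rintro ⟨hx_reg, hy_reg⟩
  obtain ⟨c, hc⟩ := hx
  obtain ⟨d, hd⟩ := hy
  have hyc : y * c = x * d :=
    (isRegular_iff_mem_nonZeroDivisors.mpr hu).left <| by
      linear_combination x * hd - y * hc
  have hc_mem : c ∈ x • (⊤ : Submodule A A) :=
    mem_of_isSMulRegular_quotient_of_smul_mem hy_reg <|
      (Submodule.mem_smul_pointwise_iff_exists _ _ _).mpr ⟨d, trivial, hyc.symm⟩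
  obtain ⟨e, -, rfl⟩ := (Submodule.mem_smul_pointwise_iff_exists _ _ _).mp hc_mem
  exact hz ⟨e, hx_reg (by simp only [smul_eq_mul] at hc ⊢; linear_combination hc)⟩

theorem depthIn_le_one {A : Type} [CommRing A] {I : Ideal A} {u z : A}
    (hu : u ∈ nonZeroDivisors A) (hz : ¬ u ∣ z) (hI : ∀ x ∈ I, u ∣ x * z) :
    depthIn A I ≤ 1 := by
  refine sSup_le ?_
  rintro _ ⟨rs, hrs, hreg, rfl⟩
  match rs, hrs, hreg with
  | [], _, _ => simp
  | [_], _, _ => simp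
  | x :: y :: rs, hrs, hreg =>
    have hxy := ((RingTheory.Sequence.isWeaklyRegular_append_iff A [x, y] rs).mp
      hreg.toIsWeaklyRegular).1
    exact (not_isWeaklyRegular_pair hu hz (hI x (hrs x (by simp)))
      (hI y (hrs y (by simp))) hxy).elim

open IsLocalization in
theorem depthIn_atPrime_le_one {A : Type} [CommRing A] (P : Ideal A) [P.IsPrime] {u z : A}
    (hu : u ∈ nonZeroDivisors A) (hdvd : ∀ f ∈ P, u ∣ f * z)
    (hndvd : ∀ s ∉ P, ¬ u ∣ z * s) :
    depthIn (Localization.AtPrime P) (IsLocalRing.maximalIdeal (Localization.AtPrime P)) ≤ 1 := by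
  set S := Localization.AtPrime P
  refine depthIn_le_one (u := algebraMap A S u) (z := algebraMap A S z)
    (map_nonZeroDivisors_le P.primeCompl S ⟨u, hu, rfl⟩) ?_ ?_
  · rintro ⟨c, hc⟩
    obtain ⟨⟨r, s⟩, rfl⟩ := mk'_surjective P.primeCompl c
    obtain ⟨t, ht⟩ := exists_of_eq (M := P.primeCompl) (S := S) (x := z * s) (y := u * r) <| by
      rw [map_mul, map_mul, hc, mul_assoc, mk'_spec]
    refine hndvd (s * t) (P.primeCompl.mul_mem s.2 t.2) ⟨t * r, ?_⟩
    linear_combination ht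
  · intro x hx
    obtain ⟨⟨f, s⟩, rfl⟩ := mk'_surjective P.primeCompl x
    obtain ⟨r, hr⟩ := hdvd f ((AtPrime.mk'_mem_maximal_iff S P f s).mp hx)
    refine ⟨mk' S r s, ?_⟩
    rw [mul_comm, mul_mk'_eq_mk'_of_mul, mul_mk'_eq_mk'_of_mul, mul_comm, hr]

theorem two_le_ringKrullDim_atPrime {A : Type*} [CommRing A] [IsDomain A] {p m : Ideal A}
    [p.IsPrime] [m.IsPrime] (hp : p ≠ ⊥) (hpm : p < m) :
    2 ≤ ringKrullDim (Localization.AtPrime m) := by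
  rw [IsLocalization.AtPrime.ringKrullDim_eq_height m]
  have hp_height : 1 ≤ p.height := Order.one_le_iff_ne_zero.mpr (by simpa using hp)
  have hm_height : 2 ≤ m.height := calc
    (2 : ℕ∞) = 1 + 1 := rfl
    _ ≤ p.height + 1 := by gcongr
    _ ≤ m.height := Ideal.height_add_one_le_of_lt_of_isPrime hpm
  exact WithBot.coe_le_coe.mpr hm_height

theorem Set.ncard_sdiff_add_ncard_compl {α : Type*} {A B : Set α} (hA : Aᶜ.Finite)
    (hB : Bᶜ.Finite) : (A \ B).ncard + Aᶜ.ncard = (B \ A).ncard + Bᶜ.ncard := by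
  have hAB : (A ∩ B)ᶜ = (A \ B) ∪ Aᶜ := by ext; simp; tauto
  have hBA : (A ∩ B)ᶜ = (B \ A) ∪ Bᶜ := by ext; simp; tauto
  rw [← Set.ncard_union_eq (disjoint_compl_right.mono_left sdiff_subset)
      (hB.subset fun _ h => h.2) hA, ← hAB, hBA,
    Set.ncard_union_eq (disjoint_compl_right.mono_left sdiff_subset) (hA.subset fun _ h => h.2) hB]

namespace MvPolynomial

def exponentSubalgebra {σ : Type*} (K : Type*) [CommSemiring K] (M : AddSubmonoid (σ →₀ ℕ)) :
    Subalgebra K (MvPolynomial σ K) where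
  carrier := {f | ↑f.support ⊆ (M : Set (σ →₀ ℕ))}
  mul_mem' {f g} hf hg d hd := by
    classical
    obtain ⟨a, ha, b, hb, rfl⟩ := Finset.mem_add.mp (support_mul f g hd)
    exact M.add_mem (hf ha) (hg hb)
  add_mem' {f g} hf hg d hd := by
    classical
    exact (Finset.mem_union.mp (support_add hd)).elim (hf ·) (hg ·)
  algebraMap_mem' c d hd := by
    rw [Finset.mem_coe, algebraMap_eq, C_apply] at hd
    rw [Finset.mem_singleton.mp (support_monomial_subset hd)]
    exact M.zero_mem

variable {σ K : Type*} [CommSemiring K]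

theorem mem_exponentSubalgebra {M : AddSubmonoid (σ →₀ ℕ)} {f : MvPolynomial σ K} :
    f ∈ exponentSubalgebra K M ↔ ↑f.support ⊆ (M : Set (σ →₀ ℕ)) := by
  rfl

theorem adjoin_monomial_one_eq_exponentSubalgebra (G : Set (σ →₀ ℕ)) :
    Algebra.adjoin K ((monomial · (1 : K)) '' G) =
      exponentSubalgebra K (AddSubmonoid.closure G) := by
  apply le_antisymm
  · refine Algebra.adjoin_le ?_
    rintro _ ⟨d, hd, rfl⟩
    rw [SetLike.mem_coe, mem_exponentSubalgebra]
    intro e he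
    rw [Finset.mem_singleton.mp (support_monomial_subset he)]
    exact AddSubmonoid.subset_closure hd
  · intro f hf
    have h_mono : ∀ d ∈ AddSubmonoid.closure G,
        monomial d (1 : K) ∈ Algebra.adjoin K ((monomial · (1 : K)) '' G) := by
      intro d hd
      induction hd using AddSubmonoid.closure_induction with
      | mem d hd => exact Algebra.subset_adjoin ⟨d, hd, rfl⟩
      | zero => rw [monomial_zero', C_1]; exact one_mem _
      | add a b _ _ ha hb => simpa only [monomial_mul, one_mul] using mul_mem ha hb
    rw [f.as_sum]
    refine Subalgebra.sum_mem _ fun d hd => ?_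
    rw [← mul_one (coeff d f), ← smul_eq_mul, ← smul_monomial]
    exact Subalgebra.smul_mem _ (h_mono d (mem_exponentSubalgebra.mp hf hd)) _

theorem X_pow_mul_X_pow_eq_monomial (i j : σ) (a b : ℕ) :
    (X i ^ a * X j ^ b : MvPolynomial σ K) =
      monomial (Finsupp.single i a + Finsupp.single j b) 1 := by
  rw [X_pow_eq_monomial, X_pow_eq_monomial, monomial_mul, mul_one]

end MvPolynomial

section NumericalSemigroup

variable {N : AddSubmonoid ℕ}

theorem ncard_om_neg_natCast (hfin : (N : Set ℕ)ᶜ.Finite) (n : ℕ) :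
    (Om N (-n)).ncard = (Om N n).ncard + n := by
  set B := (· + n) '' (N : Set ℕ)
  have h_neg : Om N (-n) = (N : Set ℕ) \ B := by
    ext b
    simp only [Om, B, Set.mem_ofPred_eq, Set.mem_sdiff, Set.mem_image, SetLike.mem_coe]
    exact and_congr_right fun _ =>
      ⟨fun h ⟨c, hc, hcb⟩ => h c hc (by omega), fun h c hc hcb => h ⟨c, hc, by omega⟩⟩
  have h_pos : (· + n) '' Om N n = B \ N := by
    ext b
    simp only [Om, B, Set.mem_ofPred_eq, Set.mem_sdiff, Set.mem_image, SetLike.mem_coe]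
    constructor
    · rintro ⟨x, ⟨hx, hc⟩, rfl⟩
      exact ⟨⟨x, hx, rfl⟩, fun h => hc _ h (by push_cast; rfl)⟩
    · rintro ⟨⟨x, hx, rfl⟩, hb⟩
      exact ⟨x, ⟨hx, fun c hc hcx => hb (by rwa [show x + n = c by omega])⟩, rfl⟩
  have h_compl : Bᶜ = Set.Iio n ∪ (· + n) '' (N : Set ℕ)ᶜ := by
    ext b
    simp only [B, Set.mem_compl_iff, Set.mem_union, Set.mem_Iio, Set.mem_image, SetLike.mem_coe]
    constructor
    · intro h
      by_cases hb : b < n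
      · exact Or.inl hb
      · exact Or.inr ⟨b - n, fun hN => h ⟨b - n, hN, by omega⟩, by omega⟩
    · rintro (hb | ⟨x, hx, rfl⟩) ⟨c, hc, hcb⟩
      · omega
      · exact hx (by rwa [show x = c by omega])
  have h_disj : Disjoint (Set.Iio n) ((· + n) '' (N : Set ℕ)ᶜ) := by
    rw [Set.disjoint_left]
    rintro _ hb ⟨x, -, rfl⟩
    simp at hb
  have hB_card : Bᶜ.ncard = n + (N : Set ℕ)ᶜ.ncard := by
    rw [h_compl, Set.ncard_union_eq h_disj (Set.finite_Iio n) (hfin.image _), Set.ncard_Iio_nat,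
      Set.ncard_image_of_injective _ (add_left_injective n)]
  have key := Set.ncard_sdiff_add_ncard_compl hfin
    (h_compl ▸ (Set.finite_Iio n).union (hfin.image _))
  rw [← h_neg, ← h_pos, Set.ncard_image_of_injective _ (add_left_injective n), hB_card] at key
  omega

theorem ncard_om_neg (hfin : (N : Set ℕ)ᶜ.Finite) (w : ℤ) :
    ((Om N (-w)).ncard : ℤ) = (Om N w).ncard + w := by
  obtain ⟨n, rfl | rfl⟩ := Int.eq_nat_or_neg w
  · exact_mod_cast ncard_om_neg_natCast hfin n
  · rw [neg_neg, ncard_om_neg_natCast hfin n]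
    push_cast
    ring

theorem exists_frobenius (hfin : (N : Set ℕ)ᶜ.Finite) (hne : ∃ m, m ∉ N) :
    ∃ F, F ∉ N ∧ ∀ k, F < k → k ∈ N := by
  obtain ⟨F, hF, hmax⟩ := Set.exists_max_image _ id hfin hne
  exact ⟨F, hF, fun k hk => by_contra fun hkN => (hmax k hkN).not_gt hk⟩

variable {F : ℕ}

theorem compl_finite_of_forall_lt_mem (hgt : ∀ k, F < k → k ∈ N) : (N : Set ℕ)ᶜ.Finite :=
  (Set.finite_Iic F).subset fun k hk => not_lt.mp fun h => hk (hgt k h)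

theorem natCast_add_le_of_mem_om (hgt : ∀ k, F < k → k ∈ N) {b : ℕ} {w : ℤ}
    (hb : b ∈ Om N w) : (b : ℤ) + w ≤ F := by
  by_contra! h
  exact hb.2 (b + w).toNat (hgt _ (by omega)) (by omega)

theorem om_finite (hgt : ∀ k, F < k → k ∈ N) (w : ℤ) : (Om N w).Finite :=
  (Set.finite_Iic (F + w.natAbs)).subset fun b hb => by
    have := natCast_add_le_of_mem_om hgt hb
    simp only [Set.mem_Iic]
    omega

theorem om_eq_empty_of_lt (hgt : ∀ k, F < k → k ∈ N) {w : ℤ} (hw : F < w) : Om N w = ∅ :=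
  Set.eq_empty_of_forall_notMem fun _ hb => by
    have := natCast_add_le_of_mem_om hgt hb
    omega

theorem om_frobenius (hF : F ∉ N) (hgt : ∀ k, F < k → k ∈ N) : Om N F = {0} := by
  ext b
  simp only [Om, Set.mem_ofPred_eq, Set.mem_singleton_iff]
  constructor
  · rintro ⟨-, hc⟩
    by_contra hb
    exact hc (b + F) (hgt _ (by omega)) (by push_cast; rfl)
  · rintro rfl
    exact ⟨N.zero_mem, fun c hc hcF => hF (by rwa [show c = F by omega] at hc)⟩

theorem ncard_om_add_le (hgt : ∀ k, F < k → k ∈ N) {w : ℤ} (hw : w < 0) :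
    (Om N (w + F)).ncard ≤ (Om N w).ncard := by
  -- `0 ∈ Ω(w)` since `w < 0`, and `b ↦ b + F` maps `Ω(w + F) \ {0}` into `Ω(w)`.
  refine Set.ncard_le_ncard_of_injOn (fun b => if b = 0 then 0 else b + F) ?_ ?_
    (om_finite hgt w)
  · intro b ⟨hb, hc⟩
    split_ifs with h0
    · exact ⟨N.zero_mem, fun c _ hcw => by omega⟩
    · exact ⟨hgt _ (by omega), fun c hc' hcw => hc c hc' (by push_cast at hcw; omega)⟩
  · intro a _ b _ hab
    simp only at hab
    split_ifs at hab <;> omega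

theorem exists_natCast_eq_of_om_eq_empty {w : ℤ} (h : Om N w = ∅) : ∃ c ∈ N, (c : ℤ) = w := by
  by_contra! hc
  have : 0 ∈ Om N w := ⟨N.zero_mem, fun c hcN => by simpa using hc c hcN⟩
  simp [h] at this

end NumericalSemigroup

noncomputable def omExponent (N : AddSubmonoid ℕ) (w : ℤ) : Fin 2 →₀ ℕ :=
  Finsupp.single 0 (Om N w).ncard + Finsupp.single 1 (Om N (-w)).ncard

noncomputable def grExponents (N : AddSubmonoid ℕ) : AddSubmonoid (Fin 2 →₀ ℕ) :=
  AddSubmonoid.closure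
    (insert (Finsupp.single 0 1 + Finsupp.single 1 1) (Set.range (omExponent N)))

section ExponentMonoid

variable {N : AddSubmonoid ℕ} {F : ℕ}

theorem omExponent_zero : omExponent N 0 = 0 := by
  have : Om N 0 = ∅ := Set.eq_empty_of_forall_notMem fun b hb => hb.2 b hb.1 (by simp)
  simp [omExponent, this]

theorem omExponent_frobenius (hF : F ∉ N) (hgt : ∀ k, F < k → k ∈ N) :
    omExponent N F = Finsupp.single 0 1 + Finsupp.single 1 (F + 1) := by
  have h_neg := ncard_om_neg (compl_finite_of_forall_lt_mem hgt) F
  rw [om_frobenius hF hgt, Set.ncard_singleton] at h_neg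
  rw [omExponent, om_frobenius hF hgt, Set.ncard_singleton]
  congr 2
  omega

theorem omExponent_add_single_eq (hfin : (N : Set ℕ)ᶜ.Finite) {w : ℤ} {n : ℕ}
    (hle : (Om N (w + n)).ncard ≤ (Om N w).ncard) :
    omExponent N w + Finsupp.single 1 n = omExponent N (w + n) +
      ((Om N w).ncard - (Om N (w + n)).ncard) • (Finsupp.single 0 1 + Finsupp.single 1 1) := by
  have h1 := ncard_om_neg hfin w
  have h2 := ncard_om_neg hfin (w + n)
  ext i
  fin_cases i <;> simp [omExponent] at h2 ⊢ <;> omega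

theorem omExponent_add_single_mem (hgt : ∀ k, F < k → k ∈ N) {w : ℤ} (hw : w ≠ 0) :
    omExponent N w + Finsupp.single 1 F ∈ grExponents N := by
  have hle : (Om N (w + F)).ncard ≤ (Om N w).ncard := by
    rcases hw.lt_or_gt with hw | hw
    · exact ncard_om_add_le hgt hw
    · simp [om_eq_empty_of_lt hgt (show (F : ℤ) < w + F by omega)]
  rw [omExponent_add_single_eq (compl_finite_of_forall_lt_mem hgt) hle]
  exact add_mem (AddSubmonoid.subset_closure (Set.mem_insert_of_mem _ ⟨w + F, rfl⟩))
    (nsmul_mem (AddSubmonoid.subset_closure (Set.mem_insert _ _)) _)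

theorem add_single_mem_grExponents (hF : F ∉ N) (hgt : ∀ k, F < k → k ∈ N) {d : Fin 2 →₀ ℕ}
    (hd : d ∈ grExponents N) (hd0 : d ≠ 0) : d + Finsupp.single 1 F ∈ grExponents N := by
  induction hd using AddSubmonoid.closure_induction with
  | mem d hd =>
    rcases hd with rfl | ⟨w, rfl⟩
    · rw [add_assoc, ← Finsupp.single_add, add_comm 1 F, ← omExponent_frobenius hF hgt]
      exact AddSubmonoid.subset_closure (Set.mem_insert_of_mem _ ⟨F, rfl⟩)
    · exact omExponent_add_single_mem hgt fun hw => hd0 (hw ▸ omExponent_zero)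
  | zero => exact absurd rfl hd0
  | add x y _ hy hx_ih hy_ih =>
    by_cases hx0 : x = 0
    · subst hx0
      rw [zero_add] at hd0 ⊢
      exact hy_ih hd0
    · rw [add_right_comm]
      exact add_mem (hx_ih hx0) hy

theorem apply_one_mem_of_mem_grExponents (hgt : ∀ k, F < k → k ∈ N) {d : Fin 2 →₀ ℕ}
    (hd : d ∈ grExponents N) (hd0 : d 0 = 0) : d 1 ∈ N := by
  induction hd using AddSubmonoid.closure_induction with
  | mem d hd =>
    rcases hd with rfl | ⟨w, rfl⟩
    · simp at hd0
    · have h_empty : Om N w = ∅ := by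
        simpa [omExponent, Set.ncard_eq_zero (om_finite hgt w)] using hd0
      obtain ⟨c, hc, rfl⟩ := exists_natCast_eq_of_om_eq_empty h_empty
      have h_neg := ncard_om_neg (compl_finite_of_forall_lt_mem hgt) c
      rw [h_empty, Set.ncard_empty] at h_neg
      simpa [omExponent, show (Om N (-c)).ncard = c by omega] using hc
  | zero => exact N.zero_mem
  | add x y _ _ hx_ih hy_ih =>
    simp only [Finsupp.add_apply, Nat.add_eq_zero_iff] at hd0 ⊢
    exact add_mem (hx_ih hd0.1) (hy_ih hd0.2)

theorem single_frobenius_notMem_grExponents (hF : F ∉ N) (hgt : ∀ k, F < k → k ∈ N) :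
    Finsupp.single 1 F ∉ grExponents N := fun h =>
  hF <| by simpa using apply_one_mem_of_mem_grExponents hgt h (by simp)

end ExponentMonoid

section GradedRing

variable {K : Type} [Field K] {N : AddSubmonoid ℕ} {F : ℕ}

theorem grR_eq_exponentSubalgebra : grR K N = exponentSubalgebra K (grExponents N) := by
  rw [grR, grExponents, ← adjoin_monomial_one_eq_exponentSubalgebra, Set.image_insert_eq,
    ← Set.range_comp, Set.singleton_union]
  congr 2
  · simpa using X_pow_mul_X_pow_eq_monomial (K := K) (0 : Fin 2) 1 1 1
  · ext p
    simp [omExponent, X_pow_mul_X_pow_eq_monomial, eq_comm]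

theorem monomial_mem_grR {d : Fin 2 →₀ ℕ} (hd : d ∈ grExponents N) (c : K) :
    monomial d c ∈ grR K N := by
  rw [grR_eq_exponentSubalgebra, mem_exponentSubalgebra]
  intro e he
  rwa [Finset.mem_singleton.mp (support_monomial_subset he)]

theorem mul_X_one_pow_mem_grR (hF : F ∉ N) (hgt : ∀ k, F < k → k ∈ N)
    {f : MvPolynomial (Fin 2) K} (hf : f ∈ grR K N) (h0 : constantCoeff f = 0) :
    f * X 1 ^ F ∈ grR K N := by
  rw [grR_eq_exponentSubalgebra, mem_exponentSubalgebra] at hf ⊢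
  intro e he
  rw [Finset.mem_coe, mem_support_iff, X_pow_eq_monomial, coeff_mul_monomial'] at he
  split_ifs at he with hle
  · have hd : e - Finsupp.single 1 F ∈ f.support := mem_support_iff.mpr (by simpa using he)
    have hd0 : e - Finsupp.single 1 F ≠ 0 := by
      rintro h
      rw [h] at hd
      exact mem_support_iff.mp hd h0
    rw [← tsub_add_cancel_of_le hle]
    exact add_single_mem_grExponents hF hgt (hf hd) hd0
  · exact absurd rfl he

theorem coeff_single_frobenius_eq_zero (hF : F ∉ N) (hgt : ∀ k, F < k → k ∈ N)
    {f : MvPolynomial (Fin 2) K} (hf : f ∈ grR K N) : coeff (Finsupp.single 1 F) f = 0 := by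
  rw [grR_eq_exponentSubalgebra, mem_exponentSubalgebra] at hf
  by_contra h
  exact single_frobenius_notMem_grExponents hF hgt (hf (mem_support_iff.mpr h))

end GradedRing

noncomputable def irrelevantIdeal (K : Type) [Field K] (N : AddSubmonoid ℕ) : Ideal (grR K N) :=
  RingHom.ker ((constantCoeff : MvPolynomial (Fin 2) K →+* K).comp (grR K N).val.toRingHom)

section IrrelevantIdeal

variable {K : Type} [Field K] {N : AddSubmonoid ℕ} {F : ℕ}

theorem mem_irrelevantIdeal {f : grR K N} :
    f ∈ irrelevantIdeal K N ↔ constantCoeff (f : MvPolynomial (Fin 2) K) = 0 :=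
  RingHom.mem_ker

instance : (irrelevantIdeal K N).IsMaximal :=
  RingHom.ker_isMaximal_of_surjective _ fun c => ⟨algebraMap K _ c, by simp⟩

theorem X_zero_mul_X_one_pow_mem_grR (hF : F ∉ N) (hgt : ∀ k, F < k → k ∈ N) :
    X 0 * X 1 ^ (F + 1) ∈ grR K N := by
  rw [← pow_one (X 0), X_pow_mul_X_pow_eq_monomial, ← omExponent_frobenius hF hgt]
  exact monomial_mem_grR (AddSubmonoid.subset_closure (Set.mem_insert_of_mem _ ⟨F, rfl⟩)) 1

theorem X_zero_pow_mem_grR (hgt : ∀ k, F < k → k ∈ N) : X 0 ^ (F + 1) ∈ grR K N := by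
  have h_empty := om_eq_empty_of_lt hgt (w := F + 1) (by omega)
  have h_neg := ncard_om_neg (compl_finite_of_forall_lt_mem hgt) (F + 1)
  rw [h_empty, Set.ncard_empty] at h_neg
  have h_gen : X 0 ^ (Om N (-(F + 1 : ℤ))).ncard * X 1 ^ (Om N (-(-(F + 1 : ℤ)))).ncard ∈
      grR K N := Algebra.subset_adjoin (Or.inr ⟨_, rfl⟩)
  rwa [neg_neg, h_empty, Set.ncard_empty, pow_zero, mul_one, show
    (Om N (-(F + 1 : ℤ))).ncard = F + 1 by omega] at h_gen

theorem depthIn_atIrrelevantIdeal_le_one (hF : F ∉ N) (hgt : ∀ k, F < k → k ∈ N) :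
    depthIn (Localization.AtPrime (irrelevantIdeal K N))
      (IsLocalRing.maximalIdeal (Localization.AtPrime (irrelevantIdeal K N))) ≤ 1 := by
  have hu_ne : (X 0 * X 1 : MvPolynomial (Fin 2) K) ≠ 0 := mul_ne_zero (X_ne_zero 0) (X_ne_zero 1)
  refine depthIn_atPrime_le_one _ (u := ⟨X 0 * X 1, Algebra.subset_adjoin (Or.inl rfl)⟩)
    (z := ⟨X 0 * X 1 ^ (F + 1), X_zero_mul_X_one_pow_mem_grR hF hgt⟩)
    (mem_nonZeroDivisors_of_ne_zero fun h => hu_ne (congrArg Subtype.val h)) ?_ ?_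
  · intro f hf
    refine ⟨⟨(f : MvPolynomial (Fin 2) K) * X 1 ^ F,
      mul_X_one_pow_mem_grR hF hgt f.2 (mem_irrelevantIdeal.mp hf)⟩, ?_⟩
    ext1
    simp only [MulMemClass.coe_mul]
    ring
  · rintro s hs ⟨r, hr⟩
    have hr' : (r : MvPolynomial (Fin 2) K) = X 1 ^ F * (s : MvPolynomial (Fin 2) K) := by
      refine mul_left_cancel₀ hu_ne ?_
      have hr_val : X 0 * X 1 ^ (F + 1) * (s : MvPolynomial (Fin 2) K) =
          X 0 * X 1 * (r : MvPolynomial (Fin 2) K) :=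
        congrArg Subtype.val hr
      rw [← hr_val]
      ring
    have := coeff_single_frobenius_eq_zero hF hgt r.2
    rw [hr', X_pow_eq_monomial, coeff_monomial_mul'] at this
    exact hs (mem_irrelevantIdeal.mpr (by simpa [constantCoeff_eq] using this))

theorem two_le_ringKrullDim_atIrrelevantIdeal (hF : F ∉ N) (hgt : ∀ k, F < k → k ∈ N) :
    2 ≤ ringKrullDim (Localization.AtPrime (irrelevantIdeal K N)) := by
  have : (Ideal.span {(X 1 : MvPolynomial (Fin 2) K)}).IsPrime :=
    (Ideal.span_singleton_prime (X_ne_zero 1)).mpr X_prime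
  refine two_le_ringKrullDim_atPrime (p := (Ideal.span {X 1}).comap (grR K N).val) ?_ ⟨?_, ?_⟩
  · intro h
    have hz : (⟨_, X_zero_mul_X_one_pow_mem_grR hF hgt⟩ : grR K N) ∈
        (Ideal.span {X 1}).comap (grR K N).val :=
      Ideal.mem_span_singleton.mpr <|
        Dvd.intro (X 0 * X 1 ^ F) (by simp only [Subalgebra.coe_val]; ring)
    rw [h, Ideal.mem_bot] at hz
    exact mul_ne_zero (X_ne_zero 0) (pow_ne_zero _ (X_ne_zero 1)) (congrArg Subtype.val hz)
  · intro f hf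
    obtain ⟨g, hg⟩ := Ideal.mem_span_singleton.mp hf
    rw [mem_irrelevantIdeal, show (f : MvPolynomial (Fin 2) K) = X 1 * g from hg]
    simp
  · intro h
    have ht := h (mem_irrelevantIdeal.mpr (by simp) : (⟨_, X_zero_pow_mem_grR hgt⟩ : grR K N) ∈
      irrelevantIdeal K N)
    rw [Ideal.mem_comap, ← Set.image_singleton, mem_ideal_span_X_image] at ht
    obtain ⟨i, rfl, hi0⟩ := ht (Finsupp.single 0 (F + 1)) (by simp [X_pow_eq_monomial])
    simp at hi0

end IrrelevantIdeal

theorem grR_not_cohenMacaulay_general (K : Type) [Field K]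
    (N : AddSubmonoid ℕ) (hfin : {m : ℕ | m ∉ N}.Finite)
    (hne : ∃ m : ℕ, m ∉ N) :
    ¬ IsCohenMacaulayRing ↥(grR K N) := by
  intro hCM
  obtain ⟨F, hF, hgt⟩ := exists_frobenius hfin hne
  have h_eq := hCM (irrelevantIdeal K N) inferInstance
  have h_dim := two_le_ringKrullDim_atIrrelevantIdeal (K := K) hF hgt
  rw [← h_eq] at h_dim
  have := h_dim.trans (WithBot.coe_le_coe.mpr (depthIn_atIrrelevantIdeal_le_one hF hgt))
  exact absurd this (by decide)

/-- If `ℕ \ N` is finite and nonempty (so `K[N]` is a 1-dimensional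
non-normal toric algebra), then `R = gr D(K[N];K)` is not Cohen–Macaulay. -/
theorem grR_not_cohenMacaulay (K : Type) [Field K] [IsAlgClosed K] [CharZero K]
    (N : AddSubmonoid ℕ) (hfin : {m : ℕ | m ∉ N}.Finite)
    (hne : ∃ m : ℕ, m ∉ N) :
    ¬ IsCohenMacaulayRing ↥(grR K N) :=
  grR_not_cohenMacaulay_general K N hfin hne
end

section
/- The subalgebra R has finite codimension in K[t, ξ]: the quotient K[t, ξ]/R of K-vector spaces (K[t,ξ] modulo the underlying K-submodule of R) is finite-dimensional over K. In particular, setting ℓ := max over w ∈ ℕ\N of 2·#Ω(−w) (and ℓ := 0 if N = ℕ), every monomial t^u ξ^v with u + v ≥ ℓ belongs to R. -/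
namespace Set

lemma compl_image_add_right (S : Set ℕ) (d : ℕ) :
    ((· + d) '' S)ᶜ = Iio d ∪ (· + d) '' Sᶜ := by
  ext x
  simp only [mem_compl_iff, mem_image, mem_union, mem_Iio, not_exists, not_and]
  constructor
  · intro h
    by_cases hx : x < d
    · exact Or.inl hx
    · exact Or.inr ⟨x - d, fun hS => h _ hS (by omega), by omega⟩
  · rintro (hx | ⟨y, hy, rfl⟩) z hz hzx
    · omega
    · exact hy (by rwa [add_right_cancel hzx] at hz)

lemma ncard_compl_image_add_right {S : Set ℕ} (hS : Sᶜ.Finite) (d : ℕ) :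
    ((· + d) '' S)ᶜ.ncard = Sᶜ.ncard + d := by
  have hdisj : Disjoint (Iio d) ((· + d) '' Sᶜ) := by
    rw [disjoint_left]
    rintro x hx ⟨y, -, rfl⟩
    exact (Nat.le_add_left d y).not_gt hx
  rw [compl_image_add_right, ncard_union_eq hdisj (finite_Iio d) (hS.image _), ncard_Iio_nat,
    ncard_image_of_injective _ (add_left_injective d), add_comm]

/-- With `T = S + d`, both `Tᶜ = (Sᶜ ∩ Tᶜ) ⊔ (S \ T)` and `Sᶜ = (Sᶜ ∩ Tᶜ) ⊔ (T \ S)` are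
finite, and `#Tᶜ = #Sᶜ + d`. -/
lemma ncard_diff_image_add_right {S : Set ℕ} (hS : Sᶜ.Finite) (d : ℕ) :
    (S \ (· + d) '' S).ncard = ((· + d) '' S \ S).ncard + d := by
  have hT : ((· + d) '' S)ᶜ.Finite := by
    rw [compl_image_add_right]
    exact (finite_Iio d).union (hS.image _)
  have h₁ := ncard_inter_add_ncard_sdiff_eq_ncard _ Sᶜ hT
  have h₂ := ncard_inter_add_ncard_sdiff_eq_ncard Sᶜ ((· + d) '' S)ᶜ hS
  rw [compl_sdiff_compl, inter_comm] at h₁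
  rw [compl_sdiff_compl] at h₂
  have := ncard_compl_image_add_right hS d
  omega

end Set

lemma pow_add_mul_pow_add_mem {M S : Type*} [CommMonoid M] [SetLike S M] [SubmonoidClass S M]
    {s : S} {x y : M} (hxy : x * y ∈ s) {a b : ℕ} (h : x ^ a * y ^ b ∈ s) (k : ℕ) :
    x ^ (a + k) * y ^ (b + k) ∈ s := by
  have hsplit : x ^ (a + k) * y ^ (b + k) = (x * y) ^ k * (x ^ a * y ^ b) := by
    rw [pow_add, pow_add, mul_pow]
    ac_rfl
  rw [hsplit]
  exact mul_mem (pow_mem hxy k) h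

namespace MvPolynomial

lemma monomial_one_fin_two {R : Type*} [CommSemiring R] (s : Fin 2 →₀ ℕ) :
    monomial s (1 : R) = X 0 ^ s 0 * X 1 ^ s 1 := by
  rw [monomial_eq, C_1, one_mul, Finsupp.prod_fintype _ _ (fun _ => pow_zero _),
    Fin.prod_univ_two]

lemma finite_quotient_of_monomial_mem {R σ : Type*} [CommRing R] [Finite σ]
    (P : Submodule R (MvPolynomial σ R)) (n : ℕ)
    (h : ∀ s : σ →₀ ℕ, n ≤ s.degree → monomial s 1 ∈ P) :
    Module.Finite R (MvPolynomial σ R ⧸ P) := by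
  have hsup : P ⊔ restrictTotalDegree σ R n = ⊤ := by
    rw [eq_top_iff, ← (basisMonomials σ R).span_eq, Submodule.span_le]
    rintro _ ⟨s, rfl⟩
    rcases le_total n s.degree with hs | hs
    · exact Submodule.mem_sup_left (h s hs)
    · exact Submodule.mem_sup_right ((monomial_mem_restrictSupport R).2 (Or.inl hs))
  have hsurj : Function.Surjective (P.mkQ ∘ₗ (restrictTotalDegree σ R n).subtype) := by
    rw [← LinearMap.range_eq_top, LinearMap.range_comp, Submodule.range_subtype,
      Submodule.map_mkQ_eq_top]
    exact hsup
  exact Module.Finite.of_surjective _ hsurj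

end MvPolynomial

section Om

variable {N : AddSubmonoid ℕ}

lemma Om_neg_natCast (d : ℕ) : Om N (-d) = (N : Set ℕ) \ (· + d) '' N := by
  ext b
  simp only [Om, Set.mem_ofPred_eq, Set.mem_sdiff, SetLike.mem_coe, Set.mem_image, not_exists,
    not_and]
  refine and_congr_right fun _ => forall₂_congr fun c _ => ?_
  omega

lemma image_add_Om_natCast (d : ℕ) : (· + d) '' Om N d = (· + d) '' N \ N := by
  ext x
  simp only [Om, Set.mem_image, Set.mem_ofPred_eq, Set.mem_sdiff, SetLike.mem_coe]
  constructor
  · rintro ⟨b, ⟨hb, hbd⟩, rfl⟩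
    exact ⟨⟨b, hb, rfl⟩, fun hx => hbd _ hx (by push_cast; ring)⟩
  · rintro ⟨⟨b, hb, rfl⟩, hx⟩
    exact ⟨b, ⟨hb, fun c hc hcb => hx (by rwa [show c = b + d by omega] at hc)⟩, rfl⟩

lemma Om_natCast_eq_empty {d : ℕ} (hd : d ∈ N) : Om N d = ∅ := by
  rw [← Set.image_eq_empty (f := (· + d)), image_add_Om_natCast, Set.sdiff_eq_empty]
  rintro _ ⟨b, hb, rfl⟩
  exact N.add_mem hb hd

lemma ncard_Om_neg_natCast (hN : (N : Set ℕ)ᶜ.Finite) (d : ℕ) :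
    (Om N (-d)).ncard = (Om N d).ncard + d := by
  rw [Om_neg_natCast, Set.ncard_diff_image_add_right hN, ← image_add_Om_natCast,
    Set.ncard_image_of_injective _ (add_left_injective d)]

lemma two_mul_ncard_Om_neg_le_sSup (hN : (N : Set ℕ)ᶜ.Finite) {d : ℕ} (hd : d ∉ N) :
    2 * (Om N (-d)).ncard ≤ sSup {m : ℕ | ∃ w : ℕ, w ∉ N ∧ m = 2 * (Om N (-(w : ℤ))).ncard} := by
  refine le_csSup ((hN.image fun w : ℕ => 2 * (Om N (-(w : ℤ))).ncard).subset ?_).bddAbove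
    ⟨d, hd, rfl⟩
  rintro m ⟨w, hw, rfl⟩
  exact ⟨w, hw, rfl⟩

lemma ncard_Om_natCast_le (hN : (N : Set ℕ)ᶜ.Finite) {d u : ℕ}
    (h : sSup {m : ℕ | ∃ w : ℕ, w ∉ N ∧ m = 2 * (Om N (-(w : ℤ))).ncard} ≤ 2 * u + d) :
    (Om N d).ncard ≤ u := by
  by_cases hd : d ∈ N
  · simp [Om_natCast_eq_empty hd]
  · have := two_mul_ncard_Om_neg_le_sSup hN hd
    rw [ncard_Om_neg_natCast hN] at this
    omega

end Om

section grR

open MvPolynomial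

variable {K : Type} [Field K] {N : AddSubmonoid ℕ}

lemma X_mul_X_mem_grR : X 0 * X 1 ∈ grR K N :=
  Algebra.subset_adjoin (Or.inl rfl)

lemma X_pow_ncard_Om_mul_X_pow_mem_grR (w : ℤ) :
    X 0 ^ (Om N w).ncard * X 1 ^ (Om N (-w)).ncard ∈ grR K N :=
  Algebra.subset_adjoin (Or.inr ⟨w, rfl⟩)

lemma X_pow_add_mem_grR (hN : (N : Set ℕ)ᶜ.Finite) {d u : ℕ} (hu : (Om N d).ncard ≤ u) :
    X 0 ^ u * X 1 ^ (u + d) ∈ grR K N ∧ X 0 ^ (u + d) * X 1 ^ u ∈ grR K N := by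
  obtain ⟨k, rfl⟩ := Nat.exists_eq_add_of_le hu
  have hpos := pow_add_mul_pow_add_mem X_mul_X_mem_grR
    (X_pow_ncard_Om_mul_X_pow_mem_grR (K := K) (N := N) d) k
  have hneg := pow_add_mul_pow_add_mem X_mul_X_mem_grR
    (X_pow_ncard_Om_mul_X_pow_mem_grR (K := K) (N := N) (-d)) k
  rw [ncard_Om_neg_natCast hN, add_right_comm] at hpos
  rw [neg_neg, ncard_Om_neg_natCast hN, add_right_comm] at hneg
  exact ⟨hpos, hneg⟩

lemma X_pow_mul_X_pow_mem_grR (hN : (N : Set ℕ)ᶜ.Finite) {u v : ℕ}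
    (h : sSup {m : ℕ | ∃ w : ℕ, w ∉ N ∧ m = 2 * (Om N (-(w : ℤ))).ncard} ≤ u + v) :
    X 0 ^ u * X 1 ^ v ∈ grR K N := by
  rcases le_total u v with huv | hvu
  · obtain ⟨d, rfl⟩ := Nat.exists_eq_add_of_le huv
    exact (X_pow_add_mem_grR hN (ncard_Om_natCast_le hN (by omega))).1
  · obtain ⟨d, rfl⟩ := Nat.exists_eq_add_of_le hvu
    exact (X_pow_add_mem_grR hN (ncard_Om_natCast_le hN (by omega))).2

end grR

theorem grR_finite_codimension_general (K : Type) [Field K]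
    (N : AddSubmonoid ℕ) (hfin : {m : ℕ | m ∉ N}.Finite) :
    FiniteDimensional K
      (MvPolynomial (Fin 2) K ⧸ Subalgebra.toSubmodule (grR K N)) ∧
    ∀ u v : ℕ,
      sSup {m : ℕ | ∃ w : ℕ, w ∉ N ∧ m = 2 * (Om N (-(w : ℤ))).ncard} ≤ u + v →
        MvPolynomial.X 0 ^ u * MvPolynomial.X 1 ^ v ∈ grR K N := by
  set ℓ := sSup {m : ℕ | ∃ w : ℕ, w ∉ N ∧ m = 2 * (Om N (-(w : ℤ))).ncard}
  have hmem : ∀ u v : ℕ, ℓ ≤ u + v → MvPolynomial.X 0 ^ u * MvPolynomial.X 1 ^ v ∈ grR K N :=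
    fun _ _ => X_pow_mul_X_pow_mem_grR hfin
  refine ⟨MvPolynomial.finite_quotient_of_monomial_mem _ ℓ fun s hs => ?_, hmem⟩
  rw [MvPolynomial.monomial_one_fin_two]
  exact hmem _ _ (by rwa [Finsupp.degree_eq_sum, Fin.sum_univ_two] at hs)

/-- `R` has finite codimension in `K[t,ξ]`: the quotient `K`-vector
space `K[t,ξ]/R` is finite dimensional; in particular, with
`ℓ := sup {2·#Ω(−w) : w ∈ ℕ \ N}` (`ℓ = 0` when `N = ℕ`), every monomial `t^u ξ^v`
with `u + v ≥ ℓ` lies in `R`. -/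
theorem grR_finite_codimension (K : Type) [Field K] [IsAlgClosed K] [CharZero K]
    (N : AddSubmonoid ℕ) (hfin : {m : ℕ | m ∉ N}.Finite) :
    FiniteDimensional K
      (MvPolynomial (Fin 2) K ⧸ Subalgebra.toSubmodule (grR K N)) ∧
    ∀ u v : ℕ,
      sSup {m : ℕ | ∃ w : ℕ, w ∉ N ∧ m = 2 * (Om N (-(w : ℤ))).ncard} ≤ u + v →
        MvPolynomial.X 0 ^ u * MvPolynomial.X 1 ^ v ∈ grR K N :=
  grR_finite_codimension_general K N hfin
end

section
/- The following six equalities of subsets of ℤ³ hold: (1) M + ℤa₁ = {(x,y,z) ∈ ℤ³ : y ≥ 0 and z ≥ 0}; (2) M + ℤa₂ = {(x,y,z) ∈ ℤ³ : x ≥ y and z ≥ 0}; (3) M + G(a₁,a₂) = {(x,y,z) ∈ ℤ³ : z ≥ 0}; (4) M + G(a₁,a₃) = {(x,y,z) ∈ ℤ³ : y ≥ 0}; (5) M + G(a₂,a₄) = {(x,y,z) ∈ ℤ³ : x ≥ y}; (6) M + G(a₃,a₄) = {(x,y,z) ∈ ℤ³ : x ≥ z}. -/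
/-!
Hartshorne's example: `a₁ = (1,0,0)`, `a₂ = (1,1,0)`, `a₃ = (1,0,1)`, `a₄ = (1,1,1)`
in `ℤ³`, `M` the submonoid they generate (so `K[M] = K[r,rs,rt,rst]`), `ℤv` the subgroup
generated by a vector `v`, and `G(v,w)` the subgroup generated by `v, w`.
-/

open Pointwise

/-- `a₁ = (1,0,0)`. -/
def a1 : Fin 3 → ℤ := ![1, 0, 0]
/-- `a₂ = (1,1,0)`. -/
def a2 : Fin 3 → ℤ := ![1, 1, 0]
/-- `a₃ = (1,0,1)`. -/
def a3 : Fin 3 → ℤ := ![1, 0, 1]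
/-- `a₄ = (1,1,1)`. -/
def a4 : Fin 3 → ℤ := ![1, 1, 1]

/-- The submonoid `M` of `ℤ³` generated by `a₁, a₂, a₃, a₄`. -/
def Mmon : AddSubmonoid (Fin 3 → ℤ) := AddSubmonoid.closure {a1, a2, a3, a4}

/-- The subgroup `ℤv` of `ℤ³` generated by `v`. -/
def Zv (v : Fin 3 → ℤ) : AddSubgroup (Fin 3 → ℤ) := AddSubgroup.closure {v}

/-- The subgroup `G(v,w)` of `ℤ³` generated by `v` and `w`. -/
def Gvw (v w : Fin 3 → ℤ) : AddSubgroup (Fin 3 → ℤ) := AddSubgroup.closure {v, w}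

/-!
The cone spanned by `M` is cut out by the four facet forms `y`, `z`, `x - y`, `x - z`, which
are nonnegative on `M`. Adding a subgroup `H` leaves exactly the facets whose forms vanish on
`H`, which gives `M + H ⊆` the stated half-space (or quadrant). Conversely, every lattice point
of that region is written explicitly as a nonnegative integer combination of the `aᵢ` plus an
element of `H`.
-/

theorem AddSubmonoid.closure_add_subset_setOf_nonneg {A B : Type*} [AddGroup A] [AddMonoid B]
    [Preorder B] [AddLeftMono B] (f : A →+ B) {s : Set A} {H : AddSubgroup A}
    (hs : ∀ a ∈ s, 0 ≤ f a) (hH : H ≤ f.ker) :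
    (closure s : Set A) + H ⊆ {x | 0 ≤ f x} := by
  rintro _ ⟨m, hm, h, hh, rfl⟩
  have hfm : m ∈ (nonneg B).comap f :=
    (closure_le (S := (nonneg B).comap f)).2 (fun a ha => mem_nonneg.2 (hs a ha)) hm
  simpa [f.mem_ker.1 (hH hh)] using mem_nonneg.1 hfm

theorem AddSubmonoid.zsmul_mem_of_nonneg_s15 {G : Type*} [AddGroup G] (S : AddSubmonoid G) {a : G}
    (ha : a ∈ S) {k : ℤ} (hk : 0 ≤ k) : k • a ∈ S := by
  lift k to ℕ using hk
  simpa using S.nsmul_mem ha k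

theorem zsmul_mem_Mmon {k : ℤ} (hk : 0 ≤ k) (a : Fin 3 → ℤ)
    (ha : a ∈ ({a1, a2, a3, a4} : Set (Fin 3 → ℤ)) := by simp) : k • a ∈ Mmon :=
  Mmon.zsmul_mem_of_nonneg_s15 (AddSubmonoid.subset_closure ha) hk

theorem zsmul_mem_Zv (k : ℤ) (v : Fin 3 → ℤ) : k • v ∈ Zv v := by
  rw [Zv, ← AddSubgroup.zmultiples_eq_closure]
  exact AddSubgroup.zsmul_mem_zmultiples v k

theorem zsmul_add_zsmul_mem_Gvw (k l : ℤ) (v w : Fin 3 → ℤ) : k • v + l • w ∈ Gvw v w :=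
  add_mem (zsmul_mem (AddSubgroup.subset_closure (by simp)) k)
    (zsmul_mem (AddSubgroup.subset_closure (by simp)) l)

section Kernel

variable {B : Type*} [AddZeroClass B] {f : (Fin 3 → ℤ) →+ B}

theorem Zv_le_ker {v : Fin 3 → ℤ} (hv : f v = 0) : Zv v ≤ f.ker :=
  (AddSubgroup.closure_le _).2 (by simpa using hv)

theorem Gvw_le_ker {v w : Fin 3 → ℤ} (hv : f v = 0) (hw : f w = 0) : Gvw v w ≤ f.ker :=
  (AddSubgroup.closure_le _).2 (by simp [Set.insert_subset_iff, hv, hw])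

end Kernel

abbrev coord (i : Fin 3) : (Fin 3 → ℤ) →+ ℤ := Pi.evalAddMonoidHom (fun _ => ℤ) i

theorem nonneg_of_mem_Mmon_add {H : AddSubgroup (Fin 3 → ℤ)} (f : (Fin 3 → ℤ) →+ ℤ)
    (hH : H ≤ f.ker) {x : Fin 3 → ℤ} (hx : x ∈ (Mmon : Set (Fin 3 → ℤ)) + H)
    (hf : 0 ≤ f a1 ∧ 0 ≤ f a2 ∧ 0 ≤ f a3 ∧ 0 ≤ f a4 := by simp [a1, a2, a3, a4]) :
    0 ≤ f x :=
  AddSubmonoid.closure_add_subset_setOf_nonneg f (by simpa using hf) hH hx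

theorem Mmon_add_Zv_a1 :
    (Mmon : Set (Fin 3 → ℤ)) + (Zv a1 : Set (Fin 3 → ℤ)) = {x | 0 ≤ x 1 ∧ 0 ≤ x 2} := by
  refine Set.Subset.antisymm (fun x hx => ⟨?_, ?_⟩) ?_
  · exact nonneg_of_mem_Mmon_add (coord 1) (Zv_le_ker (by simp [a1])) hx
  · exact nonneg_of_mem_Mmon_add (coord 2) (Zv_le_ker (by simp [a1])) hx
  rintro x ⟨hy, hz⟩
  convert Set.add_mem_add (add_mem (zsmul_mem_Mmon hy a2) (zsmul_mem_Mmon hz a3))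
    (zsmul_mem_Zv (x 0 - x 1 - x 2) a1) using 1
  ext i; fin_cases i <;> simp [a1, a2, a3]

theorem Mmon_add_Zv_a2 :
    (Mmon : Set (Fin 3 → ℤ)) + (Zv a2 : Set (Fin 3 → ℤ)) = {x | x 1 ≤ x 0 ∧ 0 ≤ x 2} := by
  refine Set.Subset.antisymm (fun x hx => ⟨sub_nonneg.1 ?_, ?_⟩) ?_
  · exact nonneg_of_mem_Mmon_add (coord 0 - coord 1) (Zv_le_ker (by simp [a2])) hx
  · exact nonneg_of_mem_Mmon_add (coord 2) (Zv_le_ker (by simp [a2])) hx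
  rintro x ⟨hxy, hz⟩
  convert Set.add_mem_add
    (add_mem (zsmul_mem_Mmon (sub_nonneg.2 hxy) a1) (zsmul_mem_Mmon hz a4))
    (zsmul_mem_Zv (x 1 - x 2) a2) using 1
  ext i; fin_cases i <;> simp [a1, a2, a4]

theorem Mmon_add_Gvw_a1_a2 :
    (Mmon : Set (Fin 3 → ℤ)) + (Gvw a1 a2 : Set (Fin 3 → ℤ)) = {x | 0 ≤ x 2} := by
  refine Set.Subset.antisymm
    (fun x hx => nonneg_of_mem_Mmon_add (coord 2) (Gvw_le_ker (by simp [a1]) (by simp [a2])) hx) ?_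
  intro x hz
  convert Set.add_mem_add (zsmul_mem_Mmon hz a4)
    (zsmul_add_zsmul_mem_Gvw (x 0 - x 1) (x 1 - x 2) a1 a2) using 1
  ext i; fin_cases i <;> simp [a1, a2, a4]

theorem Mmon_add_Gvw_a1_a3 :
    (Mmon : Set (Fin 3 → ℤ)) + (Gvw a1 a3 : Set (Fin 3 → ℤ)) = {x | 0 ≤ x 1} := by
  refine Set.Subset.antisymm
    (fun x hx => nonneg_of_mem_Mmon_add (coord 1) (Gvw_le_ker (by simp [a1]) (by simp [a3])) hx) ?_
  intro x hy
  convert Set.add_mem_add (zsmul_mem_Mmon hy a2)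
    (zsmul_add_zsmul_mem_Gvw (x 0 - x 1 - x 2) (x 2) a1 a3) using 1
  ext i; fin_cases i <;> simp [a1, a2, a3]

theorem Mmon_add_Gvw_a2_a4 :
    (Mmon : Set (Fin 3 → ℤ)) + (Gvw a2 a4 : Set (Fin 3 → ℤ)) = {x | x 1 ≤ x 0} := by
  refine Set.Subset.antisymm (fun x hx => show x 1 ≤ x 0 from sub_nonneg.1 ?_) ?_
  · exact nonneg_of_mem_Mmon_add (coord 0 - coord 1)
      (Gvw_le_ker (by simp [a2]) (by simp [a4])) hx
  intro x hxy
  convert Set.add_mem_add (zsmul_mem_Mmon (sub_nonneg.2 hxy) a1)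
    (zsmul_add_zsmul_mem_Gvw (x 1 - x 2) (x 2) a2 a4) using 1
  ext i; fin_cases i <;> simp [a1, a2, a4]

theorem Mmon_add_Gvw_a3_a4 :
    (Mmon : Set (Fin 3 → ℤ)) + (Gvw a3 a4 : Set (Fin 3 → ℤ)) = {x | x 2 ≤ x 0} := by
  refine Set.Subset.antisymm (fun x hx => show x 2 ≤ x 0 from sub_nonneg.1 ?_) ?_
  · exact nonneg_of_mem_Mmon_add (coord 0 - coord 2)
      (Gvw_le_ker (by simp [a3]) (by simp [a4])) hx
  intro x hxz
  convert Set.add_mem_add (zsmul_mem_Mmon (sub_nonneg.2 hxz) a1)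
    (zsmul_add_zsmul_mem_Gvw (x 2 - x 1) (x 1) a3 a4) using 1
  ext i; fin_cases i <;> simp [a1, a3, a4]

/-- The six equalities of subsets of `ℤ³`:
`M + ℤa₁ = {y ≥ 0, z ≥ 0}`, `M + ℤa₂ = {x ≥ y, z ≥ 0}`, `M + G(a₁,a₂) = {z ≥ 0}`,
`M + G(a₁,a₃) = {y ≥ 0}`, `M + G(a₂,a₄) = {x ≥ y}`, `M + G(a₃,a₄) = {x ≥ z}`. -/
theorem hartshorne_sector_data :
    ((Mmon : Set (Fin 3 → ℤ)) + (Zv a1 : Set (Fin 3 → ℤ))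
        = {x | 0 ≤ x 1 ∧ 0 ≤ x 2}) ∧
    ((Mmon : Set (Fin 3 → ℤ)) + (Zv a2 : Set (Fin 3 → ℤ))
        = {x | x 1 ≤ x 0 ∧ 0 ≤ x 2}) ∧
    ((Mmon : Set (Fin 3 → ℤ)) + (Gvw a1 a2 : Set (Fin 3 → ℤ)) = {x | 0 ≤ x 2}) ∧
    ((Mmon : Set (Fin 3 → ℤ)) + (Gvw a1 a3 : Set (Fin 3 → ℤ)) = {x | 0 ≤ x 1}) ∧
    ((Mmon : Set (Fin 3 → ℤ)) + (Gvw a2 a4 : Set (Fin 3 → ℤ)) = {x | x 1 ≤ x 0}) ∧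
    ((Mmon : Set (Fin 3 → ℤ)) + (Gvw a3 a4 : Set (Fin 3 → ℤ)) = {x | x 2 ≤ x 0}) := by
  exact ⟨Mmon_add_Zv_a1, Mmon_add_Zv_a2, Mmon_add_Gvw_a1_a2, Mmon_add_Gvw_a1_a3,
    Mmon_add_Gvw_a2_a4, Mmon_add_Gvw_a3_a4⟩
end
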